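/- Proposition (power counting theorem for global integrability; Proposition 7.8). Let L₁,…,L_m be linear functionals on ℝ^n whose span has dimension n (i.e. r({1,…,m}) = n). For each i let f_i: ℝ → ℝ be a measurable function, and suppose there are constants 0 < a_i ≤ b_i, c_i > 0 and real exponents α_i, β_i such that |f_i(y)| ≤ c_i|y|^{α_i} for |y| < a_i, |f_i(y)| ≤ c_i|y|^{β_i} for |y| > b_i, and sup_{a_i ≤ |y| ≤ b_i} |f_i(y)| < ∞. For S ⊆ {1,…,m} let r(S) denote the dimension of span{L_j : j ∈ S}, let s(S) = {i ∈ {1,…,m} : L_i ∈ span{L_j : j ∈ S}}, and set d₀(S) = r(S) + Σ_{i ∈ s(S)} α_i and d_∞(S) = n − r(S) + Σ_{i ∉ s(S)} β_i. If d₀(S) > 0 for every nonempty S ⊆ {1,…,m} with s(S) = S, and d_∞(S) < 0 for every proper subset S ⊊ {1,…,m} with s(S) = S (including S = ∅), then ∫_{ℝ^n} Π_{i=1}^m |f_i(L_i(x))| dx < ∞. -/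

import Mathlib

open MeasureTheory Filter Topology
open scoped BigOperators Classical

noncomputable section

namespace PC


lemma ofReal_two_rpow_sum {ι : Type*} (s : Finset ι) (x : ι → ℝ) :
    ENNReal.ofReal ((2:ℝ) ^ (∑ i ∈ s, x i)) = ∏ i ∈ s, ENNReal.ofReal ((2:ℝ) ^ (x i)) := by
  classical
  induction s using Finset.induction with
  | empty => simp
  | insert _ _ h ih =>
    rw [Finset.sum_insert h, Finset.prod_insert h, Real.rpow_add two_pos,
      ENNReal.ofReal_mul (by positivity), ih]

lemma rpow_le_max {p q y e : ℝ} (hp : 0 < p) (hpy : p ≤ y) (hyq : y ≤ q) :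
    y ^ e ≤ max (p ^ e) (q ^ e) := by
  rcases le_or_gt 0 e with he | he
  · exact le_max_of_le_right (Real.rpow_le_rpow (by linarith) hyq he)
  · exact le_max_of_le_left (Real.rpow_le_rpow_of_nonpos hp hpy he.le)

lemma min_le_rpow {p q y e : ℝ} (hp : 0 < p) (hpy : p ≤ y) (hyq : y ≤ q) :
    min (p ^ e) (q ^ e) ≤ y ^ e := by
  rcases le_or_gt 0 e with he | he
  · exact le_trans (min_le_left _ _) (Real.rpow_le_rpow hp.le hpy he)
  · exact le_trans (min_le_right _ _)
      (Real.rpow_le_rpow_of_nonpos (hp.trans_le hpy) hyq he.le)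

/-- bound |f| globally by D * (|y|^α for |y| ≤ 1, |y|^β for |y| > 1). -/
lemma pointwise_bound {f : ℝ → ℝ} {a b c α β M : ℝ} (ha : 0 < a) (hab : a ≤ b) (hc : 0 < c)
    (hsmall : ∀ y : ℝ, |y| < a → |f y| ≤ c * |y| ^ α)
    (hlarge : ∀ y : ℝ, b < |y| → |f y| ≤ c * |y| ^ β)
    (hmid : ∀ y : ℝ, a ≤ |y| → |y| ≤ b → |f y| ≤ M) :
    ∃ D : ℝ, 0 ≤ D ∧ ∀ y : ℝ, |f y| ≤ D * (if |y| ≤ 1 then |y| ^ α else |y| ^ β) := by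
  set u : ℝ := min (a ^ α) (1 ^ α) with hu
  set u' : ℝ := min (1 ^ β) (b ^ β) with hu'
  have hupos : 0 < u := lt_min (Real.rpow_pos_of_pos ha _) (Real.rpow_pos_of_pos one_pos _)
  have hu'pos : 0 < u' := lt_min (Real.rpow_pos_of_pos one_pos _)
      (Real.rpow_pos_of_pos (lt_of_lt_of_le ha hab) _)
  set K : ℝ := max (max M 0) (c * max (b ^ β) (1 ^ β)) with hK
  set K' : ℝ := max (max M 0) (c * max (a ^ α) (1 ^ α)) with hK'
  refine ⟨max c (max (K / u) (K' / u')), le_trans hc.le (le_max_left _ _), fun y => ?_⟩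
  have hy0 : (0:ℝ) ≤ |y| := abs_nonneg y
  by_cases h1 : |y| ≤ 1
  · simp only [if_pos h1]
    by_cases h2 : |y| < a
    · calc |f y| ≤ c * |y| ^ α := hsmall y h2
        _ ≤ max c (max (K / u) (K' / u')) * |y| ^ α := by
          have : (0:ℝ) ≤ |y| ^ α := Real.rpow_nonneg hy0 _
          exact mul_le_mul_of_nonneg_right (le_max_left _ _) this
    · push_neg at h2
      -- a ≤ |y| ≤ 1 : |f y| ≤ K and |y|^α ≥ u
      have hyα : u ≤ |y| ^ α := min_le_rpow ha h2 h1
      have hfK : |f y| ≤ K := by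
        by_cases h3 : |y| ≤ b
        · exact le_trans (hmid y h2 h3) (le_trans (le_max_left M 0) (le_max_left _ _))
        · push_neg at h3
          refine le_trans (hlarge y h3) (le_trans ?_ (le_max_right _ _))
          have : |y| ^ β ≤ max (b ^ β) (1 ^ β) :=
            rpow_le_max (lt_of_lt_of_le ha hab) h3.le h1
          exact mul_le_mul_of_nonneg_left this hc.le
      have hKnn : 0 ≤ K := le_trans (le_max_right M 0) (le_max_left _ _)
      calc |f y| ≤ K := hfK
        _ = (K / u) * u := by field_simp
        _ ≤ (K / u) * |y| ^ α := mul_le_mul_of_nonneg_left hyα (div_nonneg hKnn hupos.le)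
        _ ≤ max c (max (K / u) (K' / u')) * |y| ^ α := by
          exact mul_le_mul_of_nonneg_right (le_trans (le_max_left _ _) (le_max_right _ _))
            (Real.rpow_nonneg hy0 _)
  · push_neg at h1
    simp only [if_neg (not_le.mpr h1)]
    by_cases h2 : b < |y|
    · calc |f y| ≤ c * |y| ^ β := hlarge y h2
        _ ≤ max c (max (K / u) (K' / u')) * |y| ^ β :=
          mul_le_mul_of_nonneg_right (le_max_left _ _) (Real.rpow_nonneg hy0 _)
    · push_neg at h2
      -- 1 < |y| ≤ b
      have hyβ : u' ≤ |y| ^ β := min_le_rpow one_pos h1.le h2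
      have hfK' : |f y| ≤ K' := by
        by_cases h3 : a ≤ |y|
        · exact le_trans (hmid y h3 h2) (le_trans (le_max_left M 0) (le_max_left _ _))
        · push_neg at h3
          refine le_trans (hsmall y h3) (le_trans ?_ (le_max_right _ _))
          have : |y| ^ α ≤ max (a ^ α) (1 ^ α) :=
            le_of_le_of_eq (rpow_le_max one_pos h1.le h3.le) (max_comm _ _)
          exact mul_le_mul_of_nonneg_left this hc.le
      have hK'nn : 0 ≤ K' := le_trans (le_max_right M 0) (le_max_left _ _)
      calc |f y| ≤ K' := hfK'
        _ = (K' / u') * u' := by field_simp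
        _ ≤ (K' / u') * |y| ^ β := mul_le_mul_of_nonneg_left hyβ (div_nonneg hK'nn hu'pos.le)
        _ ≤ max c (max (K / u) (K' / u')) * |y| ^ β := by
          exact mul_le_mul_of_nonneg_right
            (le_trans (le_max_right _ _) (le_max_right _ _)) (Real.rpow_nonneg hy0 _)



lemma tsum_pi_prod (m : ℕ) (φ : ℤ → ENNReal) :
    ∑' k : Fin m → ℤ, ∏ i, φ (k i) = (∑' j : ℤ, φ j) ^ m := by
  induction m with
  | zero =>
    simp only [Finset.univ_eq_empty, Finset.prod_empty]
    rw [tsum_eq_single (fun _ => (0:ℤ)) (fun b hb => absurd (Subsingleton.elim b _) hb)]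
    simp
  | succ m ih =>
    rw [← (Fin.consEquiv (fun _ : Fin (m+1) => ℤ)).tsum_eq]
    have : ∀ p : ℤ × (Fin m → ℤ),
        (∏ i, φ ((Fin.consEquiv (fun _ : Fin (m+1) => ℤ)) p i))
          = φ p.1 * ∏ i, φ (p.2 i) := by
      intro p
      simp [Fin.consEquiv, Fin.prod_univ_succ]
    rw [tsum_congr this, ENNReal.tsum_prod (f := fun (a : ℤ) (v : Fin m → ℤ) => φ a * ∏ i, φ (v i))]
    simp_rw [ENNReal.tsum_mul_left]
    rw [ENNReal.tsum_mul_right, ih, pow_succ]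
    ring

lemma tsum_int_geom {ρ : ℝ} (h0 : 0 ≤ ρ) (h1 : ρ < 1) :
    ∑' j : ℤ, ENNReal.ofReal (ρ ^ (j.natAbs)) < ⊤ := by
  have hs : Summable (fun j : ℤ => ρ ^ (j.natAbs)) := by
    apply Summable.of_nat_of_neg
    · simpa using summable_geometric_of_lt_one h0 h1
    · simpa using summable_geometric_of_lt_one h0 h1
  rw [← ENNReal.ofReal_tsum_of_nonneg (fun j => pow_nonneg h0 _) hs]
  exact ENNReal.ofReal_lt_top

lemma tsum_pi_rpow (m : ℕ) {δ : ℝ} (hδ : 0 < δ) :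
    ∑' k : Fin m → ℤ, ∏ i, ENNReal.ofReal ((2:ℝ) ^ (-δ * |(k i : ℝ)|)) < ⊤ := by
  have hρ0 : (0:ℝ) ≤ (2:ℝ) ^ (-δ) := (Real.rpow_pos_of_pos two_pos _).le
  have hρ1 : (2:ℝ) ^ (-δ) < 1 :=
    Real.rpow_lt_one_of_one_lt_of_neg one_lt_two (neg_neg_of_pos hδ)
  have hre : ∀ j : ℤ, (2:ℝ) ^ (-δ * |(j:ℝ)|) = ((2:ℝ) ^ (-δ)) ^ (j.natAbs) := by
    intro j
    rw [← Real.rpow_natCast ((2:ℝ) ^ (-δ)) j.natAbs, ← Real.rpow_mul (by norm_num)]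
    congr 1
    rw [Nat.cast_natAbs]
    push_cast
    ring
  calc ∑' k : Fin m → ℤ, ∏ i, ENNReal.ofReal ((2:ℝ) ^ (-δ * |(k i : ℝ)|))
      = ∑' k : Fin m → ℤ, ∏ i, ENNReal.ofReal (((2:ℝ) ^ (-δ)) ^ ((k i).natAbs)) := by
        apply tsum_congr; intro k; apply Finset.prod_congr rfl; intro i _; rw [hre]
    _ = (∑' j : ℤ, ENNReal.ofReal (((2:ℝ) ^ (-δ)) ^ (j.natAbs))) ^ m :=
        tsum_pi_prod m (fun j => ENNReal.ofReal (((2:ℝ) ^ (-δ)) ^ (j.natAbs)))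
    _ < ⊤ := ENNReal.pow_lt_top (tsum_int_geom hρ0 hρ1)



variable {m : ℕ} {W : Type*} [AddCommGroup W] [Module ℝ W]

/-- lexicographic key -/
def key (k : Fin m → ℤ) (i : Fin m) : ℤ := (m + 1) * k i + i

lemma key_lt_k_le {k : Fin m → ℤ} {i j : Fin m} (h : key k j < key k i) : k j ≤ k i := by
  unfold key at h
  have hj : (j : ℤ) < m + 1 := by exact_mod_cast Nat.lt_succ_of_lt j.2
  have hi0 : (0 : ℤ) ≤ i := Int.ofNat_nonneg _
  have hj0 : (0 : ℤ) ≤ j := Int.ofNat_nonneg _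
  have hi : (i : ℤ) < m + 1 := by exact_mod_cast Nat.lt_succ_of_lt i.2
  by_contra hc
  push_neg at hc
  have h2 : k i + 1 ≤ k j := hc
  nlinarith

lemma k_lt_key_lt {k : Fin m → ℤ} {i j : Fin m} (h : k j < k i) : key k j < key k i := by
  unfold key
  have hj : (j : ℤ) < m + 1 := by exact_mod_cast Nat.lt_succ_of_lt j.2
  have hi0 : (0 : ℤ) ≤ i := Int.ofNat_nonneg _
  have h2 : k j + 1 ≤ k i := h
  nlinarith

lemma key_inj {k : Fin m → ℤ} {i j : Fin m} (h : key k j = key k i) : j = i := by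
  rcases lt_trichotomy (k j) (k i) with hlt | heq | hgt
  · exact absurd h (ne_of_lt (k_lt_key_lt hlt))
  · have : (j : ℤ) = i := by unfold key at h; rw [heq] at h; linarith
    exact Fin.ext (by exact_mod_cast this)
  · exact absurd h.symm (ne_of_lt (k_lt_key_lt hgt))

/-- greedy set -/
def gset (L : Fin m → W) (k : Fin m → ℤ) : Finset (Fin m) :=
  Finset.univ.filter
    (fun i => L i ∉ Submodule.span ℝ (L '' {j | key k j < key k i}))

lemma mem_gset {L : Fin m → W} {k : Fin m → ℤ} {i : Fin m} :
    i ∈ gset L k ↔ L i ∉ Submodule.span ℝ (L '' {j | key k j < key k i}) := by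
  simp [gset]

lemma gset_span (L : Fin m → W) (k : Fin m → ℤ) (D : Set (Fin m))
    (hD : ∀ i ∈ D, ∀ j : Fin m, key k j < key k i → j ∈ D) :
    Submodule.span ℝ (L '' ((gset L k : Set (Fin m)) ∩ D)) = Submodule.span ℝ (L '' D) := by
  refine le_antisymm (Submodule.span_mono (Set.image_mono Set.inter_subset_right)) ?_
  have main : ∀ c : ℕ, ∀ i, i ∈ D →
      (Finset.univ.filter (fun j => key k j < key k i)).card ≤ c →
      L i ∈ Submodule.span ℝ (L '' ((gset L k : Set (Fin m)) ∩ D)) := by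
    intro c
    induction c using Nat.strong_induction_on with
    | _ c ih =>
      intro i hiD hcard
      by_cases hiB : i ∈ gset L k
      · exact Submodule.subset_span ⟨i, ⟨hiB, hiD⟩, rfl⟩
      · rw [mem_gset, not_not] at hiB
        refine Submodule.span_le.mpr ?_ hiB
        rintro v ⟨j, hjP, rfl⟩
        have hsub : Finset.univ.filter (fun l => key k l < key k j) ⊂
            Finset.univ.filter (fun l => key k l < key k i) := by
          constructor
          · intro l hl
            simp only [Finset.mem_filter, Finset.mem_univ, true_and] at hl ⊢
            exact hl.trans hjP
          · intro hcon
            have := hcon (Finset.mem_filter.mpr ⟨Finset.mem_univ j, hjP⟩)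
            simp only [Finset.mem_filter] at this
            exact lt_irrefl _ this.2
        have hlt : (Finset.univ.filter (fun l => key k l < key k j)).card < c :=
          lt_of_lt_of_le (Finset.card_lt_card hsub) hcard
        exact ih _ hlt j (hD i hiD j hjP) le_rfl
  refine Submodule.span_le.mpr ?_
  rintro v ⟨i, hiD, rfl⟩
  exact main _ i hiD le_rfl

lemma gset_indep (L : Fin m → W) (k : Fin m → ℤ) :
    LinearIndependent ℝ (fun i : (gset L k : Finset (Fin m)) => L i) := by
  rw [Fintype.linearIndependent_iff]
  intro g hsum
  by_contra hcon
  push_neg at hcon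
  obtain ⟨j0, hj0⟩ := hcon
  have hSne : (Finset.univ.filter (fun j : (gset L k : Finset (Fin m)) => g j ≠ 0)).Nonempty :=
    ⟨j0, Finset.mem_filter.mpr ⟨Finset.mem_univ _, hj0⟩⟩
  obtain ⟨i, hiS, hmax⟩ := Finset.exists_max_image
    (Finset.univ.filter (fun j : (gset L k : Finset (Fin m)) => g j ≠ 0))
    (fun j => key k (j : Fin m)) hSne
  have hgi : g i ≠ 0 := (Finset.mem_filter.mp hiS).2
  have hiB : (i : Fin m) ∈ gset L k := i.2
  rw [mem_gset] at hiB
  apply hiB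
  have hrel : g i • L (i : Fin m) = - ∑ j ∈ Finset.univ.erase i,
      g j • L (j : Fin m) := by
    apply eq_neg_of_add_eq_zero_left
    rw [Finset.add_sum_erase Finset.univ (fun j : (gset L k : Finset (Fin m)) =>
      g j • L (j : Fin m)) (Finset.mem_univ i)]
    exact hsum
  have hLi : L (i : Fin m) = (g i)⁻¹ • (g i • L (i : Fin m)) := by
    rw [smul_smul, inv_mul_cancel₀ hgi, one_smul]
  rw [hLi, hrel]
  refine Submodule.smul_mem _ _ (Submodule.neg_mem _ (Submodule.sum_mem _ ?_))
  intro j hj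
  by_cases hgj : g j = 0
  · rw [hgj, zero_smul]; exact Submodule.zero_mem _
  · have hjS : j ∈ Finset.univ.filter (fun j : (gset L k : Finset (Fin m)) => g j ≠ 0) :=
      Finset.mem_filter.mpr ⟨Finset.mem_univ _, hgj⟩
    have hle : key k (j : Fin m) ≤ key k (i : Fin m) := hmax j hjS
    have hne : (j : Fin m) ≠ (i : Fin m) := by
      intro hcoe
      exact (Finset.mem_erase.mp hj).1 (Subtype.ext hcoe)
    have hltkey : key k (j : Fin m) < key k (i : Fin m) :=
      lt_of_le_of_ne hle (fun hkeq => hne (key_inj hkeq))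
    exact Submodule.smul_mem _ _ (Submodule.subset_span ⟨(j : Fin m), hltkey, rfl⟩)

set_option maxHeartbeats 1000000 in
lemma gset_card_inter (L : Fin m → W) (k : Fin m → ℤ) (T : Finset (Fin m))
    (hD : ∀ i ∈ T, ∀ j : Fin m, key k j < key k i → j ∈ T) :
    ((gset L k ∩ T).card : ℕ) =
      Module.finrank ℝ (Submodule.span ℝ (L '' (T : Set (Fin m)))) := by
  have hindep : LinearIndependent ℝ (fun i : ((gset L k ∩ T) : Finset (Fin m)) => L i) := by
    have hincl : ∀ x : ((gset L k ∩ T) : Finset (Fin m)),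
        (x : Fin m) ∈ gset L k := fun x => (Finset.mem_inter.mp x.2).1
    exact (gset_indep L k).comp (fun x => ⟨x.1, hincl x⟩)
      (fun x y hxy => Subtype.ext (by simpa using congrArg Subtype.val hxy))
  have hspan : Submodule.span ℝ (L '' ((gset L k ∩ T : Finset (Fin m)) : Set (Fin m)))
      = Submodule.span ℝ (L '' (T : Set (Fin m))) := by
    rw [Finset.coe_inter]
    exact gset_span L k (T : Set (Fin m)) (fun i hi j hj => hD i hi j hj)
  have hrange : Set.range (fun i : ((gset L k ∩ T) : Finset (Fin m)) => L i)
      = L '' ((gset L k ∩ T : Finset (Fin m)) : Set (Fin m)) := by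
    rw [Set.image_eq_range]; rfl
  have := finrank_span_eq_card hindep
  rw [hrange, hspan] at this
  rw [this, Fintype.card_coe]



variable {n m : ℕ}

lemma span_coeff_bound (L : Fin m → ((Fin n → ℝ) →ₗ[ℝ] ℝ)) :
    ∃ c₁ : ℝ, 1 ≤ c₁ ∧ ∀ (T : Finset (Fin m)) (i : Fin m),
      L i ∈ Submodule.span ℝ (L '' (T : Set (Fin m))) →
      ∀ x, |L i x| ≤ c₁ * ∑ l ∈ T, |L l x| := by
  have per : ∀ p : Fin m × Finset (Fin m), ∃ c : ℝ, 0 ≤ c ∧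
      (L p.1 ∈ Submodule.span ℝ (L '' (p.2 : Set (Fin m))) →
        ∀ x, |L p.1 x| ≤ c * ∑ l ∈ p.2, |L l x|) := by
    rintro ⟨i, T⟩
    by_cases h : L i ∈ Submodule.span ℝ (L '' (T : Set (Fin m)))
    · rw [show L '' (T : Set (Fin m)) = Set.range (fun l : T => L l) from
        (Set.image_eq_range _ _), Submodule.mem_span_range_iff_exists_fun] at h
      obtain ⟨g, hg⟩ := h
      refine ⟨∑ l : T, |g l|, Finset.sum_nonneg (fun l _ => abs_nonneg _), fun _ x => ?_⟩
      have hx : L i x = ∑ l : T, g l * L (l : Fin m) x := by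
        rw [← hg]
        simp [LinearMap.sum_apply, LinearMap.smul_apply]
      rw [hx]
      calc |∑ l : T, g l * L (l : Fin m) x| ≤ ∑ l : T, |g l * L (l : Fin m) x| :=
            Finset.abs_sum_le_sum_abs _ _
        _ = ∑ l : T, |g l| * |L (l : Fin m) x| := by simp [abs_mul]
        _ ≤ ∑ l : T, (∑ l' : T, |g l'|) * |L (l : Fin m) x| := by
            refine Finset.sum_le_sum (fun l _ => ?_)
            exact mul_le_mul_of_nonneg_right
              (Finset.single_le_sum (fun l' _ => abs_nonneg (g l')) (Finset.mem_univ l))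
              (abs_nonneg _)
        _ = (∑ l' : T, |g l'|) * ∑ l : T, |L (l : Fin m) x| := by
            rw [Finset.mul_sum]
        _ = (∑ l' : T, |g l'|) * ∑ l ∈ T, |L l x| := by
            rw [Finset.sum_coe_sort T (fun l => |L l x|)]
    · exact ⟨0, le_rfl, fun h' => absurd h' h⟩
  choose cf hcf0 hcf using per
  refine ⟨1 + ∑ p : Fin m × Finset (Fin m), cf p,
    le_add_of_nonneg_right (Finset.sum_nonneg fun p _ => hcf0 p), ?_⟩
  intro T i hmem x
  have h1 : |L i x| ≤ cf (i, T) * ∑ l ∈ T, |L l x| := hcf (i, T) hmem x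
  have h2 : cf (i, T) ≤ 1 + ∑ p : Fin m × Finset (Fin m), cf p := by
    have := Finset.single_le_sum (fun p _ => hcf0 p) (Finset.mem_univ (i, T))
    linarith
  exact h1.trans (mul_le_mul_of_nonneg_right h2
    (Finset.sum_nonneg fun l _ => abs_nonneg _))

lemma count_neg (k : Fin m → ℤ) (t₀ : ℤ) (ht₀ : ∀ i, t₀ ≤ k i) (i : Fin m) :
    ((((Finset.Ico t₀ 0).filter (fun t => k i ≤ t)).card : ℤ)) = -(min (k i) 0) := by
  have hf : (Finset.Ico t₀ 0).filter (fun t => k i ≤ t) = Finset.Ico (max t₀ (k i)) 0 := by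
    ext t
    simp only [Finset.mem_filter, Finset.mem_Ico]
    omega
  rw [hf, Int.card_Ico]
  have := ht₀ i
  omega

lemma count_pos (k : Fin m → ℤ) (t₁ : ℤ) (ht₁ : ∀ i, k i ≤ t₁) (i : Fin m) :
    ((((Finset.Ico 0 t₁).filter (fun t => t < k i)).card : ℤ)) = max (k i) 0 := by
  have hf : (Finset.Ico 0 t₁).filter (fun t => t < k i) = Finset.Ico 0 (min (k i) t₁) := by
    ext t
    simp only [Finset.mem_filter, Finset.mem_Ico]
    omega
  rw [hf, Int.card_Ico]
  have := ht₁ i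
  omega

lemma layer_sum_neg (k : Fin m → ℤ) (c : Fin m → ℝ) (t₀ : ℤ) (ht₀ : ∀ i, t₀ ≤ k i) :
    ∑ i, ((min (k i) 0 : ℤ) : ℝ) * c i
      = - ∑ t ∈ Finset.Ico t₀ 0, ∑ i ∈ Finset.univ.filter (fun i => k i ≤ t), c i := by
  have h1 : ∑ t ∈ Finset.Ico t₀ 0, ∑ i ∈ Finset.univ.filter (fun i => k i ≤ t), c i
      = ∑ t ∈ Finset.Ico t₀ 0, ∑ i : Fin m, (if k i ≤ t then c i else 0) :=
    Finset.sum_congr rfl (fun t _ => Finset.sum_filter _ _)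
  have hkey : ∀ i : Fin m, ∑ t ∈ Finset.Ico t₀ 0, (if k i ≤ t then c i else 0)
      = -((min (k i) 0 : ℤ) : ℝ) * c i := by
    intro i
    rw [← Finset.sum_filter, Finset.sum_const, nsmul_eq_mul]
    have hc := count_neg k t₀ ht₀ i
    have : ((((Finset.Ico t₀ 0).filter (fun t => k i ≤ t)).card : ℕ) : ℝ)
        = -((min (k i) 0 : ℤ) : ℝ) := by
      rw [show (-((min (k i) 0 : ℤ) : ℝ)) = (((-(min (k i) 0) : ℤ)) : ℝ) by push_cast; ring,
        ← hc]
      norm_cast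
    rw [this]
  rw [h1, Finset.sum_comm]
  rw [Finset.sum_congr rfl (fun i _ => hkey i)]
  simp [neg_mul]

lemma layer_sum_pos (k : Fin m → ℤ) (c : Fin m → ℝ) (t₁ : ℤ) (ht₁ : ∀ i, k i ≤ t₁) :
    ∑ i, ((max (k i) 0 : ℤ) : ℝ) * c i
      = ∑ t ∈ Finset.Ico 0 t₁, ∑ i ∈ Finset.univ.filter (fun i => ¬ (k i ≤ t)), c i := by
  have h1 : ∑ t ∈ Finset.Ico 0 t₁, ∑ i ∈ Finset.univ.filter (fun i => ¬ (k i ≤ t)), c i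
      = ∑ t ∈ Finset.Ico 0 t₁, ∑ i : Fin m, (if t < k i then c i else 0) := by
    refine Finset.sum_congr rfl (fun t _ => ?_)
    rw [Finset.sum_filter]
    refine Finset.sum_congr rfl (fun i _ => ?_)
    by_cases h : k i ≤ t
    · rw [if_neg (by omega), if_neg (by omega)]
    · rw [if_pos h, if_pos (by omega)]
  have hkey : ∀ i : Fin m, ∑ t ∈ Finset.Ico 0 t₁, (if t < k i then c i else 0)
      = ((max (k i) 0 : ℤ) : ℝ) * c i := by
    intro i
    rw [← Finset.sum_filter, Finset.sum_const, nsmul_eq_mul]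
    have hc := count_pos k t₁ ht₁ i
    have : ((((Finset.Ico 0 t₁).filter (fun t => t < k i)).card : ℕ) : ℝ)
        = ((max (k i) 0 : ℤ) : ℝ) := by rw [← hc]; norm_cast
    rw [this]
  rw [h1, Finset.sum_comm]
  exact Finset.sum_congr rfl (fun i _ => (hkey i).symm)

lemma shell_bound {y : ℝ} {kk : ℤ} {α β : ℝ}
    (hy1 : (2:ℝ)^kk < y) (hy2 : y ≤ (2:ℝ)^(kk+1)) :
    (if y ≤ 1 then y ^ α else y ^ β) ≤
      (2:ℝ) ^ (|α| + |β|) * (2:ℝ) ^ ((kk:ℝ) * (if kk < 0 then α else β)) := by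
  have h2 : (0:ℝ) ≤ 2 := by norm_num
  have hzlo : ((2:ℝ)^kk) = (2:ℝ) ^ ((kk:ℤ):ℝ) := (Real.rpow_intCast 2 kk).symm
  have hzhi : ((2:ℝ)^(kk+1)) = (2:ℝ) ^ (((kk+1:ℤ)):ℝ) := (Real.rpow_intCast 2 (kk+1)).symm
  have hy0 : (0:ℝ) < y := lt_trans (zpow_pos (by norm_num) _) hy1
  have hcomb : ∀ e e' : ℝ, e ≤ |α| + |β| + (kk:ℝ) * e' →
      (2:ℝ) ^ e ≤ (2:ℝ) ^ (|α| + |β|) * (2:ℝ) ^ ((kk:ℝ) * e') := by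
    intro e e' he
    rw [← Real.rpow_add two_pos]
    exact (Real.rpow_le_rpow_left_iff one_lt_two).mpr he
  by_cases hk : kk < 0
  · have hkk1 : ((kk:ℝ)+1) ≤ 0 := by exact_mod_cast (by omega : kk + 1 ≤ 0)
    have hy1' : y ≤ 1 := by
      refine hy2.trans ?_
      rw [hzhi]
      calc (2:ℝ) ^ (((kk+1:ℤ)):ℝ) ≤ (2:ℝ) ^ (0:ℝ) := by
            apply Real.rpow_le_rpow_of_exponent_le one_le_two
            exact_mod_cast (by omega : kk + 1 ≤ 0)
        _ = 1 := Real.rpow_zero 2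
    rw [if_pos hy1', if_pos hk]
    rcases le_or_gt 0 α with hα | hα
    · calc y ^ α ≤ ((2:ℝ)^(kk+1)) ^ α := Real.rpow_le_rpow hy0.le hy2 hα
        _ = (2:ℝ) ^ ((((kk+1:ℤ)):ℝ) * α) := by
            rw [hzhi, ← Real.rpow_mul h2]
        _ ≤ (2:ℝ) ^ (|α| + |β|) * (2:ℝ) ^ ((kk:ℝ) * α) := by
            apply hcomb
            push_cast
            have : α ≤ |α| := le_abs_self α
            have : (0:ℝ) ≤ |β| := abs_nonneg β
            nlinarith [le_abs_self α, abs_nonneg β]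
    · calc y ^ α ≤ ((2:ℝ)^kk) ^ α :=
          Real.rpow_le_rpow_of_nonpos (zpow_pos (by norm_num) _) hy1.le hα.le
        _ = (2:ℝ) ^ ((kk:ℝ) * α) := by rw [hzlo, ← Real.rpow_mul h2]
        _ ≤ (2:ℝ) ^ (|α| + |β|) * (2:ℝ) ^ ((kk:ℝ) * α) := by
            apply hcomb
            nlinarith [abs_nonneg α, abs_nonneg β]
  · push_neg at hk
    have hy1' : ¬ (y ≤ 1) := by
      push_neg
      refine lt_of_le_of_lt ?_ hy1
      rw [hzlo]
      calc (1:ℝ) = (2:ℝ) ^ (0:ℝ) := (Real.rpow_zero 2).symm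
        _ ≤ (2:ℝ) ^ ((kk:ℤ):ℝ) := by
            apply Real.rpow_le_rpow_of_exponent_le one_le_two
            exact_mod_cast hk
    rw [if_neg hy1', if_neg (not_lt.mpr hk)]
    rcases le_or_gt 0 β with hβ | hβ
    · calc y ^ β ≤ ((2:ℝ)^(kk+1)) ^ β := Real.rpow_le_rpow hy0.le hy2 hβ
        _ = (2:ℝ) ^ ((((kk+1:ℤ)):ℝ) * β) := by rw [hzhi, ← Real.rpow_mul h2]
        _ ≤ (2:ℝ) ^ (|α| + |β|) * (2:ℝ) ^ ((kk:ℝ) * β) := by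
            apply hcomb
            push_cast
            nlinarith [le_abs_self β, abs_nonneg α]
    · calc y ^ β ≤ ((2:ℝ)^kk) ^ β :=
          Real.rpow_le_rpow_of_nonpos (zpow_pos (by norm_num) _) hy1.le hβ.le
        _ = (2:ℝ) ^ ((kk:ℝ) * β) := by rw [hzlo, ← Real.rpow_mul h2]
        _ ≤ (2:ℝ) ^ (|α| + |β|) * (2:ℝ) ^ ((kk:ℝ) * β) := by
            apply hcomb
            nlinarith [abs_nonneg α, abs_nonneg β]


def detConst (L : Fin m → ((Fin n → ℝ) →ₗ[ℝ] ℝ)) : ENNReal :=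
  Finset.univ.sup (fun s : Fin n → Fin m =>
    ENNReal.ofReal |(LinearMap.det (LinearMap.pi (fun j => L (s j))))⁻¹|)

lemma detConst_lt_top (L : Fin m → ((Fin n → ℝ) →ₗ[ℝ] ℝ)) : detConst L < ⊤ :=
  (Finset.sup_lt_iff (by simp)).mpr (fun b _ => ENNReal.ofReal_lt_top)

lemma vol_shell (L : Fin m → ((Fin n → ℝ) →ₗ[ℝ] ℝ)) (B : Finset (Fin m))
    (hBcard : B.card = n)
    (hBtop : Submodule.span ℝ (L '' (B : Set (Fin m))) = ⊤)
    (k : Fin m → ℤ) :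
    volume {x : Fin n → ℝ | ∀ i, |L i x| ∈ Set.Ioc ((2:ℝ)^(k i)) ((2:ℝ)^(k i + 1))}
      ≤ detConst L * ENNReal.ofReal ((2:ℝ) ^ ((2*(n:ℝ)) + ∑ i ∈ B, ((k i : ℤ) : ℝ))) := by
  set e := B.orderIsoOfFin hBcard with he
  set s : Fin n → Fin m := fun j => (e j : Fin m) with hs
  set T : (Fin n → ℝ) →ₗ[ℝ] (Fin n → ℝ) := LinearMap.pi (fun j => L (s j)) with hT
  have hker : ∀ x, T x = 0 → x = 0 := by
    intro x hx
    have hBx : ∀ i ∈ B, L i x = 0 := by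
      intro i hi
      obtain ⟨j, hj⟩ := e.surjective ⟨i, hi⟩
      have h1 : T x j = L (s j) x := rfl
      have h2 : T x j = 0 := by rw [hx]; rfl
      have : L (s j) x = 0 := by rw [← h1, h2]
      simpa [hs, hj] using this
    have hall : ∀ φ : Module.Dual ℝ (Fin n → ℝ), φ x = 0 := by
      intro φ
      have hφ : φ ∈ Submodule.span ℝ (L '' (B : Set (Fin m))) := by
        rw [hBtop]; trivial
      induction hφ using Submodule.span_induction with
      | mem ψ hψ =>
        obtain ⟨i, hiB, rfl⟩ := hψ
        exact hBx i hiB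
      | zero => rfl
      | add ψ χ _ _ h1 h2 => simp [LinearMap.add_apply, h1, h2]
      | smul r ψ _ h1 => simp [LinearMap.smul_apply, h1]
    exact (Module.forall_dual_apply_eq_zero_iff ℝ x).mp hall
  have hinj : Function.Injective T := by
    rw [← LinearMap.ker_eq_bot]
    exact LinearMap.ker_eq_bot'.mpr hker
  have hsurj : Function.Surjective T := (LinearMap.injective_iff_surjective).mp hinj
  have hdet : LinearMap.det T ≠ 0 := by
    have h1 : IsUnit (LinearMap.det
        ((LinearEquiv.ofBijective T ⟨hinj, hsurj⟩ : (Fin n → ℝ) ≃ₗ[ℝ] (Fin n → ℝ)) :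
          (Fin n → ℝ) →ₗ[ℝ] (Fin n → ℝ))) := LinearEquiv.isUnit_det' _
    exact h1.ne_zero
  have hsub : {x : Fin n → ℝ | ∀ i, |L i x| ∈ Set.Ioc ((2:ℝ)^(k i)) ((2:ℝ)^(k i + 1))}
      ⊆ T ⁻¹' (Set.univ.pi fun j =>
        Set.Icc (-((2:ℝ)^(k (s j) + 1))) ((2:ℝ)^(k (s j) + 1))) := by
    intro x hx
    simp only [Set.mem_preimage, Set.mem_pi, Set.mem_univ, forall_true_left]
    intro j
    have habs : |L (s j) x| ≤ (2:ℝ)^(k (s j) + 1) := (hx (s j)).2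
    have h1 : T x j = L (s j) x := rfl
    rw [Set.mem_Icc, h1]
    exact abs_le.mp habs
  have hvol : volume (Set.univ.pi fun j : Fin n =>
      Set.Icc (-((2:ℝ)^(k (s j) + 1))) ((2:ℝ)^(k (s j) + 1)))
      = ENNReal.ofReal ((2:ℝ) ^ ((2*(n:ℝ)) + ∑ i ∈ B, ((k i : ℤ) : ℝ))) := by
    rw [volume_pi_pi]
    have hfac : ∀ j : Fin n,
        volume (Set.Icc (-((2:ℝ)^(k (s j) + 1))) ((2:ℝ)^(k (s j) + 1)))
        = ENNReal.ofReal ((2:ℝ) ^ (((k (s j) : ℝ)) + 2)) := by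
      intro j
      rw [Real.volume_Icc]
      congr 1
      have : (2:ℝ)^(k (s j) + 1) - (-((2:ℝ)^(k (s j) + 1))) = 2 * (2:ℝ)^(k (s j) + 1) := by
        ring
      rw [this]
      have h2 : (2:ℝ) * (2:ℝ)^(k (s j) + 1) = (2:ℝ)^(k (s j) + 2) := by
        rw [zpow_add₀ (two_ne_zero : (2:ℝ) ≠ 0) (k (s j)) 1,
          zpow_add₀ (two_ne_zero : (2:ℝ) ≠ 0) (k (s j)) 2]
        norm_num
        ring
      rw [h2, ← Real.rpow_intCast 2 (k (s j) + 2)]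
      congr 1
      push_cast
      ring
    rw [Finset.prod_congr rfl (fun j _ => hfac j), ← ofReal_two_rpow_sum]
    congr 1
    have hre : ∑ j : Fin n, ((k (s j) : ℝ)) = ∑ i ∈ B, ((k i : ℤ) : ℝ) := by
      have h1 : ∑ j : Fin n, ((k (s j) : ℝ)) = ∑ b : B, ((k (b : Fin m) : ℝ)) :=
        Equiv.sum_comp e.toEquiv (fun b : B => ((k (b : Fin m) : ℝ)))
      rw [h1, Finset.sum_coe_sort B (fun i => ((k i : ℤ) : ℝ))]
    rw [← hre]
    congr 1
    rw [Finset.sum_add_distrib, Finset.sum_const, Finset.card_univ, Fintype.card_fin,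
      nsmul_eq_mul]
    ring
  calc volume {x : Fin n → ℝ | ∀ i, |L i x| ∈ Set.Ioc ((2:ℝ)^(k i)) ((2:ℝ)^(k i + 1))}
      ≤ volume (T ⁻¹' (Set.univ.pi fun j =>
          Set.Icc (-((2:ℝ)^(k (s j) + 1))) ((2:ℝ)^(k (s j) + 1)))) := measure_mono hsub
    _ = ENNReal.ofReal |(LinearMap.det T)⁻¹| * volume (Set.univ.pi fun j =>
          Set.Icc (-((2:ℝ)^(k (s j) + 1))) ((2:ℝ)^(k (s j) + 1))) :=
        Measure.addHaar_preimage_linearMap volume hdet _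
    _ ≤ detConst L * ENNReal.ofReal ((2:ℝ) ^ ((2*(n:ℝ)) + ∑ i ∈ B, ((k i : ℤ) : ℝ))) := by
        rw [hvol, hT]
        unfold detConst
        exact mul_le_mul_left (Finset.le_sup (f := fun s : Fin n → Fin m =>
          ENNReal.ofReal |(LinearMap.det (LinearMap.pi fun j => L (s j)))⁻¹|)
          (Finset.mem_univ s)) _


variable {W' : Type*}

/-- closedness of an index set -/
def IsClosedSet (L : Fin m → ((Fin n → ℝ) →ₗ[ℝ] ℝ)) (S : Finset (Fin m)) : Prop :=
  Finset.univ.filter (fun i => L i ∈ Submodule.span ℝ (L '' (S : Set (Fin m)))) = S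

lemma comb_estimate
    (L : Fin m → ((Fin n → ℝ) →ₗ[ℝ] ℝ)) (α β : Fin m → ℝ)
    (hm : 0 < m)
    (hrank : Module.finrank ℝ ↥(Submodule.span ℝ (Set.range L)) = n)
    (h0 : ∀ S : Finset (Fin m), S.Nonempty →
      Finset.univ.filter (fun i => L i ∈ Submodule.span ℝ (L '' (S : Set (Fin m)))) = S →
      0 < (Module.finrank ℝ ↥(Submodule.span ℝ (L '' (S : Set (Fin m)))) : ℝ) +
        ∑ i ∈ Finset.univ.filter
          (fun i => L i ∈ Submodule.span ℝ (L '' (S : Set (Fin m)))), α i)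
    (hinf : ∀ S : Finset (Fin m), S ≠ Finset.univ →
      Finset.univ.filter (fun i => L i ∈ Submodule.span ℝ (L '' (S : Set (Fin m)))) = S →
      ((n : ℝ) - (Module.finrank ℝ ↥(Submodule.span ℝ (L '' (S : Set (Fin m)))) : ℝ) +
        ∑ i ∈ (Finset.univ.filter
          (fun i => L i ∈ Submodule.span ℝ (L '' (S : Set (Fin m)))))ᶜ, β i) < 0) :
    ∃ ε C : ℝ, 0 < ε ∧ ∀ (k : Fin m → ℤ) (x₀ : Fin n → ℝ),
      (∀ i, |L i x₀| ∈ Set.Ioc ((2:ℝ)^(k i)) ((2:ℝ)^(k i + 1))) →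
      (∑ i, ((k i : ℤ) : ℝ) * (if k i < 0 then α i else β i))
        + ∑ i ∈ gset L k, ((k i : ℤ) : ℝ)
      ≤ -ε * ((Finset.univ.sup (fun i => (k i).natAbs) : ℕ) : ℝ) + C := by
  classical
  -- positivity of d0 on closed nonempty sets
  have hd0pos : ∀ S : Finset (Fin m), IsClosedSet L S → S.Nonempty →
      0 < (Module.finrank ℝ ↥(Submodule.span ℝ (L '' (S : Set (Fin m)))) : ℝ)
        + ∑ i ∈ S, α i := by
    intro S hS hne
    have h := h0 S hne hS
    rw [hS] at h
    exact h
  have hdinfneg : ∀ S : Finset (Fin m), IsClosedSet L S → S ≠ Finset.univ →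
      ((n : ℝ) - (Module.finrank ℝ ↥(Submodule.span ℝ (L '' (S : Set (Fin m)))) : ℝ)
        + ∑ i ∈ Sᶜ, β i) < 0 := by
    intro S hS hne
    have h := hinf S hne hS
    rw [hS] at h
    exact h
  -- uniform ε₀
  obtain ⟨ε₀, hε₀pos, hε₀⟩ : ∃ ε₀ : ℝ, 0 < ε₀ ∧ ∀ S : Finset (Fin m),
      IsClosedSet L S → S.Nonempty →
      ε₀ ≤ (Module.finrank ℝ ↥(Submodule.span ℝ (L '' (S : Set (Fin m)))) : ℝ)
        + ∑ i ∈ S, α i := by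
    by_cases hne : ((Finset.univ : Finset (Finset (Fin m))).filter
        (fun S => IsClosedSet L S ∧ S.Nonempty)).Nonempty
    · obtain ⟨S₀, hS₀mem, hS₀min⟩ := Finset.exists_min_image _
        (fun S : Finset (Fin m) =>
          (Module.finrank ℝ ↥(Submodule.span ℝ (L '' (S : Set (Fin m)))) : ℝ)
          + ∑ i ∈ S, α i) hne
      simp only [Finset.mem_filter, Finset.mem_univ, true_and] at hS₀mem
      exact ⟨_, hd0pos S₀ hS₀mem.1 hS₀mem.2, fun S hc hn =>
        hS₀min S (Finset.mem_filter.mpr ⟨Finset.mem_univ _, hc, hn⟩)⟩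
    · refine ⟨1, one_pos, fun S hc hn => absurd ?_ hne⟩
      exact ⟨S, Finset.mem_filter.mpr ⟨Finset.mem_univ _, hc, hn⟩⟩
  -- uniform ε₁
  obtain ⟨ε₁, hε₁pos, hε₁⟩ : ∃ ε₁ : ℝ, 0 < ε₁ ∧ ∀ S : Finset (Fin m),
      IsClosedSet L S → S ≠ Finset.univ →
      ((n : ℝ) - (Module.finrank ℝ ↥(Submodule.span ℝ (L '' (S : Set (Fin m)))) : ℝ)
        + ∑ i ∈ Sᶜ, β i) ≤ -ε₁ := by
    by_cases hne : ((Finset.univ : Finset (Finset (Fin m))).filter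
        (fun S => IsClosedSet L S ∧ S ≠ Finset.univ)).Nonempty
    · obtain ⟨S₀, hS₀mem, hS₀max⟩ := Finset.exists_max_image _
        (fun S : Finset (Fin m) =>
          (n : ℝ) - (Module.finrank ℝ ↥(Submodule.span ℝ (L '' (S : Set (Fin m)))) : ℝ)
          + ∑ i ∈ Sᶜ, β i) hne
      simp only [Finset.mem_filter, Finset.mem_univ, true_and] at hS₀mem
      refine ⟨-((n : ℝ) - (Module.finrank ℝ
          ↥(Submodule.span ℝ (L '' (S₀ : Set (Fin m)))) : ℝ) + ∑ i ∈ S₀ᶜ, β i),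
        by linarith [hdinfneg S₀ hS₀mem.1 hS₀mem.2], fun S hc hn => ?_⟩
      have := hS₀max S (Finset.mem_filter.mpr ⟨Finset.mem_univ _, hc, hn⟩)
      linarith
    · refine ⟨1, one_pos, fun S hc hn => absurd ?_ hne⟩
      exact ⟨S, Finset.mem_filter.mpr ⟨Finset.mem_univ _, hc, hn⟩⟩
  obtain ⟨c₁, hc₁1, hc₁⟩ := span_coeff_bound L
  obtain ⟨c₀, hc₀⟩ : ∃ c₀ : ℕ, c₁ * m ≤ 2 ^ c₀ := by
    obtain ⟨N, hN⟩ := exists_nat_gt (c₁ * m)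
    refine ⟨N, hN.le.trans ?_⟩
    exact_mod_cast (Nat.lt_two_pow_self (n := N)).le
  set M₁ : ℝ := ∑ i, (|α i| + |β i| + 1) + n + 1 with hM₁def
  have hM₁nn : 0 ≤ M₁ := by
    have : (0:ℝ) ≤ ∑ i, (|α i| + |β i| + 1) :=
      Finset.sum_nonneg (fun i _ => by positivity)
    simp only [hM₁def]
    positivity
  refine ⟨min ε₀ ε₁, (ε₀ + ε₁ + 2*M₁) * ((m * c₀ : ℕ) : ℝ), lt_min hε₀pos hε₁pos, ?_⟩
  intro k x₀ hx₀
  set B := gset L k with hBdef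
  set Mk : ℕ := Finset.univ.sup (fun i => (k i).natAbs) with hMkdef
  set t₀ : ℤ := -(1 + (Mk:ℤ)) with ht₀def
  set t₁ : ℤ := 1 + (Mk:ℤ) with ht₁def
  have habs : ∀ i, ((k i).natAbs : ℤ) ≤ (Mk : ℤ) := fun i => by
    exact_mod_cast Finset.le_sup (f := fun i => (k i).natAbs) (Finset.mem_univ i)
  have ht₀ : ∀ i, t₀ ≤ k i := fun i => by have := habs i; omega
  have ht₁ : ∀ i, k i ≤ t₁ := fun i => by have := habs i; omega
  -- adapted-basis cardinalities
  have hTdc : ∀ t : ℤ, ∀ i ∈ Finset.univ.filter (fun i => k i ≤ t),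
      ∀ j : Fin m, key k j < key k i → j ∈ Finset.univ.filter (fun i => k i ≤ t) := by
    intro t i hi j hj
    simp only [Finset.mem_filter, Finset.mem_univ, true_and] at hi ⊢
    exact le_trans (key_lt_k_le hj) hi
  have hcard : ∀ t : ℤ, ((B ∩ Finset.univ.filter (fun i => k i ≤ t)).card : ℝ)
      = (Module.finrank ℝ ↥(Submodule.span ℝ
          (L '' ((Finset.univ.filter (fun i => k i ≤ t)) : Set (Fin m)))) : ℝ) := by
    intro t
    exact_mod_cast gset_card_inter L k _ (hTdc t)
  have hTuniv : Finset.univ.filter (fun i => k i ≤ t₁) = Finset.univ :=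
    Finset.filter_true_of_mem (fun i _ => ht₁ i)
  have hBn : (B.card : ℝ) = (n:ℝ) := by
    have h1 := gset_card_inter L k (Finset.univ.filter (fun i => k i ≤ t₁)) (hTdc t₁)
    rw [hTuniv, Finset.inter_univ] at h1
    rw [h1, Finset.coe_univ, Set.image_univ, hrank]
  set cneg : Fin m → ℝ := fun i => α i + (if i ∈ B then 1 else 0) with hcnegdef
  set cpos : Fin m → ℝ := fun i => β i + (if i ∈ B then 1 else 0) with hcposdef
  -- rewrite LHS
  have hLHS : (∑ i, ((k i : ℤ) : ℝ) * (if k i < 0 then α i else β i))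
        + ∑ i ∈ B, ((k i : ℤ) : ℝ)
      = ∑ i, ((min (k i) 0 : ℤ) : ℝ) * cneg i + ∑ i, ((max (k i) 0 : ℤ) : ℝ) * cpos i := by
    have h2 : ∑ i ∈ B, ((k i : ℤ) : ℝ)
        = ∑ i : Fin m, (if i ∈ B then ((k i : ℤ) : ℝ) else 0) := by
      rw [Finset.sum_ite_mem, Finset.univ_inter]
    rw [h2, ← Finset.sum_add_distrib, ← Finset.sum_add_distrib]
    refine Finset.sum_congr rfl (fun i _ => ?_)
    simp only [hcnegdef, hcposdef]
    rcases lt_or_ge (k i) 0 with h | h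
    · rw [if_pos h, min_eq_left h.le, max_eq_right h.le]
      by_cases hiB : i ∈ B <;> simp [hiB] <;> push_cast <;> ring
    · rw [if_neg (not_lt.mpr h), min_eq_right h, max_eq_left h]
      by_cases hiB : i ∈ B <;> simp [hiB] <;> push_cast <;> ring
  have hIdNeg := layer_sum_neg k cneg t₀ ht₀
  have hIdPos := layer_sum_pos k cpos t₁ ht₁
  -- value of Φ on closed nonempty levels
  have hPhiC : ∀ t : ℤ, (∃ i, k i ≤ t) →
      IsClosedSet L (Finset.univ.filter (fun i => k i ≤ t)) →
      ε₀ ≤ ∑ i ∈ Finset.univ.filter (fun i => k i ≤ t), cneg i := by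
    intro t hne hc
    have hnee : (Finset.univ.filter (fun i => k i ≤ t)).Nonempty := by
      obtain ⟨i, hi⟩ := hne
      exact ⟨i, Finset.mem_filter.mpr ⟨Finset.mem_univ _, hi⟩⟩
    refine (hε₀ _ hc hnee).trans (le_of_eq ?_)
    simp only [hcnegdef]
    rw [Finset.sum_add_distrib, Finset.sum_boole, Finset.filter_mem_eq_inter,
      Finset.inter_comm, hcard t]
    ring
  -- value of Ψ on closed proper levels
  have hBfilter : ∀ t : ℤ, B ∩ Finset.univ.filter (fun i => k i ≤ t)
      = B.filter (fun i => k i ≤ t) := by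
    intro t; ext i; simp [Finset.mem_filter, Finset.mem_inter]
  have hBfilterN : ∀ t : ℤ, B ∩ Finset.univ.filter (fun i => ¬ k i ≤ t)
      = B.filter (fun i => ¬ k i ≤ t) := by
    intro t; ext i; simp [Finset.mem_filter, Finset.mem_inter]
  have hPsiC : ∀ t : ℤ, (∃ i, ¬ k i ≤ t) →
      IsClosedSet L (Finset.univ.filter (fun i => k i ≤ t)) →
      ∑ i ∈ Finset.univ.filter (fun i => ¬ k i ≤ t), cpos i ≤ -ε₁ := by
    intro t hex hc
    obtain ⟨i₀, hi₀⟩ := hex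
    have hne : Finset.univ.filter (fun i => k i ≤ t) ≠ Finset.univ := by
      intro hcon
      have h8 : i₀ ∈ Finset.univ.filter (fun i => k i ≤ t) := by
        rw [hcon]; exact Finset.mem_univ i₀
      exact hi₀ (Finset.mem_filter.mp h8).2
    refine le_trans (le_of_eq ?_) (hε₁ _ hc hne)
    have hcards : ((B.filter (fun i => ¬ k i ≤ t)).card : ℝ)
        = (n : ℝ) - (Module.finrank ℝ ↥(Submodule.span ℝ
            (L '' ((Finset.univ.filter (fun i => k i ≤ t)) : Set (Fin m)))) : ℝ) := by
      have h3 := Finset.card_filter_add_card_filter_not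
        (s := B) (p := fun i => k i ≤ t)
      have h4 : ((B.filter (fun i => k i ≤ t)).card : ℝ)
          = (Module.finrank ℝ ↥(Submodule.span ℝ
              (L '' ((Finset.univ.filter (fun i => k i ≤ t)) : Set (Fin m)))) : ℝ) := by
        rw [← hBfilter t]; exact hcard t
      have h5 : ((B.filter (fun i => k i ≤ t)).card : ℝ)
          + ((B.filter (fun i => ¬ k i ≤ t)).card : ℝ) = (B.card : ℝ) := by
        exact_mod_cast congrArg (Nat.cast : ℕ → ℝ) h3
      rw [← h4, ← hBn]
      linarith
    have hcompl : (Finset.univ.filter (fun i => k i ≤ t))ᶜ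
        = Finset.univ.filter (fun i => ¬ k i ≤ t) := Finset.compl_filter _
    simp only [hcposdef]
    rw [Finset.sum_add_distrib, Finset.sum_boole, Finset.filter_mem_eq_inter,
      Finset.inter_comm, hBfilterN t, hcards, hcompl]
    ring
  -- witness for non-closed levels
  have hNC : ∀ t : ℤ, ¬ IsClosedSet L (Finset.univ.filter (fun i => k i ≤ t)) →
      ∃ i, t < k i ∧ k i ≤ t + c₀ := by
    intro t hnc
    have hsub : Finset.univ.filter (fun i => k i ≤ t) ⊆
        Finset.univ.filter (fun i => L i ∈ Submodule.span ℝ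
          (L '' ((Finset.univ.filter (fun i => k i ≤ t)) : Set (Fin m)))) := by
      intro i hi
      refine Finset.mem_filter.mpr ⟨Finset.mem_univ _, Submodule.subset_span ?_⟩
      exact ⟨i, Finset.mem_coe.mpr hi, rfl⟩
    have hss : Finset.univ.filter (fun i => k i ≤ t) ⊂
        Finset.univ.filter (fun i => L i ∈ Submodule.span ℝ
          (L '' ((Finset.univ.filter (fun i => k i ≤ t)) : Set (Fin m)))) :=
      hsub.ssubset_of_ne (fun h => hnc h.symm)
    obtain ⟨i, himem, hinot⟩ := Finset.exists_of_ssubset hss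
    have hispan : L i ∈ Submodule.span ℝ
        (L '' ((Finset.univ.filter (fun i => k i ≤ t)) : Set (Fin m))) :=
      (Finset.mem_filter.mp himem).2
    have hkit : ¬ k i ≤ t := by
      intro h
      exact hinot (Finset.mem_filter.mpr ⟨Finset.mem_univ _, h⟩)
    refine ⟨i, not_le.mp hkit, ?_⟩
    -- numeric admissibility
    have h1 : |L i x₀| ≤ c₁ * ∑ l ∈ Finset.univ.filter (fun i => k i ≤ t), |L l x₀| :=
      hc₁ _ i hispan x₀
    have h2 : ∑ l ∈ Finset.univ.filter (fun i => k i ≤ t), |L l x₀|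
        ≤ (m : ℝ) * (2:ℝ)^(t+1) := by
      calc ∑ l ∈ Finset.univ.filter (fun i => k i ≤ t), |L l x₀|
          ≤ ∑ l ∈ Finset.univ.filter (fun i => k i ≤ t), (2:ℝ)^(t+1) := by
            refine Finset.sum_le_sum (fun l hl => ?_)
            have hkl : k l ≤ t := (Finset.mem_filter.mp hl).2
            exact le_trans (hx₀ l).2 (zpow_le_zpow_right₀ one_le_two (by omega))
        _ = ((Finset.univ.filter (fun i => k i ≤ t)).card : ℝ) * (2:ℝ)^(t+1) := by
            rw [Finset.sum_const, nsmul_eq_mul]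
        _ ≤ (m : ℝ) * (2:ℝ)^(t+1) := by
            refine mul_le_mul_of_nonneg_right ?_ (by positivity)
            have := Finset.card_filter_le Finset.univ (fun i => k i ≤ t)
            have h6 : (Finset.univ : Finset (Fin m)).card = m := by
              rw [Finset.card_univ, Fintype.card_fin]
            exact_mod_cast h6 ▸ this
    have h3 : (2:ℝ)^(k i) < (2:ℝ)^((c₀:ℤ) + (t+1)) := by
      calc (2:ℝ)^(k i) < |L i x₀| := (hx₀ i).1
        _ ≤ c₁ * ((m:ℝ) * (2:ℝ)^(t+1)) :=
          h1.trans (mul_le_mul_of_nonneg_left h2 (by linarith))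
        _ = (c₁ * m) * (2:ℝ)^(t+1) := by ring
        _ ≤ (2:ℝ)^(c₀:ℕ) * (2:ℝ)^(t+1) :=
          mul_le_mul_of_nonneg_right hc₀ (by positivity)
        _ = (2:ℝ)^((c₀:ℤ)) * (2:ℝ)^(t+1) := by rw [zpow_natCast]
        _ = (2:ℝ)^((c₀:ℤ) + (t+1)) := (zpow_add₀ (two_ne_zero) _ _).symm
    have h4 : k i < (c₀:ℤ) + (t+1) := (zpow_lt_zpow_iff_right₀ one_lt_two).mp h3
    omega
  -- count bound for non-closed levels
  have hcount : ∀ s0 : Finset ℤ, (∀ t ∈ s0, ∃ i, t < k i ∧ k i ≤ t + c₀) →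
      (s0.card : ℝ) ≤ ((m * c₀ : ℕ) : ℝ) := by
    intro s0 hs0
    have hsub : s0 ⊆ Finset.univ.biUnion (fun i : Fin m => Finset.Ico (k i - c₀) (k i)) := by
      intro t ht
      obtain ⟨i, hlt, hle⟩ := hs0 t ht
      exact Finset.mem_biUnion.mpr ⟨i, Finset.mem_univ _,
        Finset.mem_Ico.mpr ⟨by omega, hlt⟩⟩
    have h5 : s0.card ≤ m * c₀ := by
      calc s0.card ≤ (Finset.univ.biUnion
            (fun i : Fin m => Finset.Ico (k i - c₀) (k i))).card :=
          Finset.card_le_card hsub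
        _ ≤ ∑ i : Fin m, (Finset.Ico (k i - c₀) (k i)).card := Finset.card_biUnion_le
        _ = ∑ i : Fin m, c₀ := by
            refine Finset.sum_congr rfl (fun i _ => ?_)
            rw [Int.card_Ico]
            omega
        _ = m * c₀ := by rw [Finset.sum_const, Finset.card_univ, Fintype.card_fin,
            smul_eq_mul]
    exact_mod_cast h5
  -- uniform lower/upper bounds on levels
  have hPhiLB : ∀ t : ℤ, -M₁ ≤ ∑ i ∈ Finset.univ.filter (fun i => k i ≤ t), cneg i := by
    intro t
    have hper : ∀ i : Fin m, |cneg i| ≤ |α i| + |β i| + 1 := by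
      intro i
      simp only [hcnegdef]
      refine (abs_add_le _ _).trans ?_
      have h7 : |if i ∈ B then (1:ℝ) else 0| ≤ 1 := by
        by_cases hiB : i ∈ B <;> simp [hiB]
      have := abs_nonneg (β i)
      linarith
    have habs2 : |∑ i ∈ Finset.univ.filter (fun i => k i ≤ t), cneg i| ≤ M₁ := by
      calc |∑ i ∈ Finset.univ.filter (fun i => k i ≤ t), cneg i|
          ≤ ∑ i ∈ Finset.univ.filter (fun i => k i ≤ t), |cneg i| :=
            Finset.abs_sum_le_sum_abs _ _
        _ ≤ ∑ i ∈ Finset.univ.filter (fun i => k i ≤ t), (|α i| + |β i| + 1) :=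
            Finset.sum_le_sum (fun i _ => hper i)
        _ ≤ ∑ i, (|α i| + |β i| + 1) :=
            Finset.sum_le_sum_of_subset_of_nonneg (Finset.subset_univ _)
              (fun i _ _ => by positivity)
        _ ≤ M₁ := by
            simp only [hM₁def]
            have hn0 : (0:ℝ) ≤ (n:ℝ) := Nat.cast_nonneg n
            linarith
    exact (abs_le.mp habs2).1
  have hPsiUB : ∀ t : ℤ, ∑ i ∈ Finset.univ.filter (fun i => ¬ k i ≤ t), cpos i ≤ M₁ := by
    intro t
    have hper : ∀ i : Fin m, cpos i ≤ |α i| + |β i| + 1 := by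
      intro i
      simp only [hcposdef]
      have h7 : (if i ∈ B then (1:ℝ) else 0) ≤ 1 := by
        by_cases hiB : i ∈ B <;> simp [hiB]
      have := le_abs_self (β i)
      have := abs_nonneg (α i)
      linarith
    calc ∑ i ∈ Finset.univ.filter (fun i => ¬ k i ≤ t), cpos i
        ≤ ∑ i ∈ Finset.univ.filter (fun i => ¬ k i ≤ t), (|α i| + |β i| + 1) :=
          Finset.sum_le_sum (fun i _ => hper i)
      _ ≤ ∑ i, (|α i| + |β i| + 1) :=
          Finset.sum_le_sum_of_subset_of_nonneg (Finset.subset_univ _)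
            (fun i _ _ => by positivity)
      _ ≤ M₁ := by
          simp only [hM₁def]
          have hn0 : (0:ℝ) ≤ (n:ℝ) := Nat.cast_nonneg n
          linarith
  -- split the negative-side sum
  have hTempty : ∀ t : ℤ, ¬ (∃ i, k i ≤ t) →
      (Finset.univ.filter (fun i : Fin m => k i ≤ t)) = ∅ := by
    intro t ht
    rw [Finset.filter_eq_empty_iff]
    intro i _
    exact fun h => ht ⟨i, h⟩
  have hUempty : ∀ t : ℤ, ¬ (∃ i, ¬ k i ≤ t) →
      (Finset.univ.filter (fun i : Fin m => ¬ k i ≤ t)) = ∅ := by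
    intro t ht
    rw [Finset.filter_eq_empty_iff]
    intro i _
    exact fun h => ht ⟨i, h⟩
  have hsplitN := Finset.sum_filter_add_sum_filter_not (Finset.Ico t₀ (0:ℤ))
    (fun t => ∃ i, k i ≤ t)
    (fun t => ∑ i ∈ Finset.univ.filter (fun i => k i ≤ t), cneg i)
  have hzeroN : ∑ t ∈ (Finset.Ico t₀ (0:ℤ)).filter (fun t => ¬ ∃ i, k i ≤ t),
      (∑ i ∈ Finset.univ.filter (fun i => k i ≤ t), cneg i) = 0 := by
    refine Finset.sum_eq_zero (fun t ht => ?_)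
    rw [hTempty t (Finset.mem_filter.mp ht).2, Finset.sum_empty]
  have hsplitN2 := Finset.sum_filter_add_sum_filter_not
    ((Finset.Ico t₀ (0:ℤ)).filter (fun t => ∃ i, k i ≤ t))
    (fun t => IsClosedSet L (Finset.univ.filter (fun i => k i ≤ t)))
    (fun t => ∑ i ∈ Finset.univ.filter (fun i => k i ≤ t), cneg i)
  set sC := ((Finset.Ico t₀ (0:ℤ)).filter (fun t => ∃ i, k i ≤ t)).filter
    (fun t => IsClosedSet L (Finset.univ.filter (fun i => k i ≤ t))) with hsCdef
  set sN := ((Finset.Ico t₀ (0:ℤ)).filter (fun t => ∃ i, k i ≤ t)).filter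
    (fun t => ¬ IsClosedSet L (Finset.univ.filter (fun i => k i ≤ t))) with hsNdef
  have hPhiSum : ∑ t ∈ Finset.Ico t₀ (0:ℤ),
        (∑ i ∈ Finset.univ.filter (fun i => k i ≤ t), cneg i)
      = (∑ t ∈ sC, ∑ i ∈ Finset.univ.filter (fun i => k i ≤ t), cneg i)
        + ∑ t ∈ sN, ∑ i ∈ Finset.univ.filter (fun i => k i ≤ t), cneg i := by
    rw [← hsplitN, hzeroN, add_zero, ← hsplitN2]
  have hCbound : ε₀ * (sC.card : ℝ)
      ≤ ∑ t ∈ sC, ∑ i ∈ Finset.univ.filter (fun i => k i ≤ t), cneg i := by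
    have h := Finset.card_nsmul_le_sum sC
      (fun t => ∑ i ∈ Finset.univ.filter (fun i => k i ≤ t), cneg i) ε₀
      (fun t ht => by
        simp only [hsCdef, Finset.mem_filter] at ht
        exact hPhiC t ht.1.2 ht.2)
    rw [nsmul_eq_mul] at h
    linarith
  have hNbound : -M₁ * (sN.card : ℝ)
      ≤ ∑ t ∈ sN, ∑ i ∈ Finset.univ.filter (fun i => k i ≤ t), cneg i := by
    have h := Finset.card_nsmul_le_sum sN
      (fun t => ∑ i ∈ Finset.univ.filter (fun i => k i ≤ t), cneg i) (-M₁)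
      (fun t _ => hPhiLB t)
    rw [nsmul_eq_mul] at h
    linarith
  have hNcard : ((sN.card : ℕ) : ℝ) ≤ ((m * c₀ : ℕ) : ℝ) := by
    refine hcount sN (fun t ht => ?_)
    simp only [hsNdef, Finset.mem_filter] at ht
    exact hNC t ht.2
  have hcardsplitN : ((sC.card : ℕ) : ℝ) + ((sN.card : ℕ) : ℝ)
      = ((((Finset.Ico t₀ (0:ℤ)).filter (fun t => ∃ i, k i ≤ t)).card : ℕ) : ℝ) := by
    have h := Finset.card_filter_add_card_filter_not
      (s := (Finset.Ico t₀ (0:ℤ)).filter (fun t => ∃ i, k i ≤ t))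
      (p := fun t => IsClosedSet L (Finset.univ.filter (fun i => k i ≤ t)))
    exact_mod_cast congrArg (Nat.cast : ℕ → ℝ) h
  -- split the positive-side sum
  have hsplitP := Finset.sum_filter_add_sum_filter_not (Finset.Ico (0:ℤ) t₁)
    (fun t => ∃ i, ¬ k i ≤ t)
    (fun t => ∑ i ∈ Finset.univ.filter (fun i => ¬ k i ≤ t), cpos i)
  have hzeroP : ∑ t ∈ (Finset.Ico (0:ℤ) t₁).filter (fun t => ¬ ∃ i, ¬ k i ≤ t),
      (∑ i ∈ Finset.univ.filter (fun i => ¬ k i ≤ t), cpos i) = 0 := by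
    refine Finset.sum_eq_zero (fun t ht => ?_)
    rw [hUempty t (Finset.mem_filter.mp ht).2, Finset.sum_empty]
  have hsplitP2 := Finset.sum_filter_add_sum_filter_not
    ((Finset.Ico (0:ℤ) t₁).filter (fun t => ∃ i, ¬ k i ≤ t))
    (fun t => IsClosedSet L (Finset.univ.filter (fun i => k i ≤ t)))
    (fun t => ∑ i ∈ Finset.univ.filter (fun i => ¬ k i ≤ t), cpos i)
  set pC := ((Finset.Ico (0:ℤ) t₁).filter (fun t => ∃ i, ¬ k i ≤ t)).filter
    (fun t => IsClosedSet L (Finset.univ.filter (fun i => k i ≤ t))) with hpCdef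
  set pN := ((Finset.Ico (0:ℤ) t₁).filter (fun t => ∃ i, ¬ k i ≤ t)).filter
    (fun t => ¬ IsClosedSet L (Finset.univ.filter (fun i => k i ≤ t))) with hpNdef
  have hPsiSum : ∑ t ∈ Finset.Ico (0:ℤ) t₁,
        (∑ i ∈ Finset.univ.filter (fun i => ¬ k i ≤ t), cpos i)
      = (∑ t ∈ pC, ∑ i ∈ Finset.univ.filter (fun i => ¬ k i ≤ t), cpos i)
        + ∑ t ∈ pN, ∑ i ∈ Finset.univ.filter (fun i => ¬ k i ≤ t), cpos i := by
    rw [← hsplitP, hzeroP, add_zero, ← hsplitP2]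
  have hC'bound : ∑ t ∈ pC, ∑ i ∈ Finset.univ.filter (fun i => ¬ k i ≤ t), cpos i
      ≤ -ε₁ * (pC.card : ℝ) := by
    have h := Finset.sum_le_card_nsmul pC
      (fun t => ∑ i ∈ Finset.univ.filter (fun i => ¬ k i ≤ t), cpos i) (-ε₁)
      (fun t ht => by
        simp only [hpCdef, Finset.mem_filter] at ht
        exact hPsiC t ht.1.2 ht.2)
    rw [nsmul_eq_mul] at h
    linarith
  have hN'bound : ∑ t ∈ pN, ∑ i ∈ Finset.univ.filter (fun i => ¬ k i ≤ t), cpos i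
      ≤ M₁ * (pN.card : ℝ) := by
    have h := Finset.sum_le_card_nsmul pN
      (fun t => ∑ i ∈ Finset.univ.filter (fun i => ¬ k i ≤ t), cpos i) M₁
      (fun t _ => hPsiUB t)
    rw [nsmul_eq_mul] at h
    linarith
  have hN'card : ((pN.card : ℕ) : ℝ) ≤ ((m * c₀ : ℕ) : ℝ) := by
    refine hcount pN (fun t ht => ?_)
    simp only [hpNdef, Finset.mem_filter] at ht
    exact hNC t ht.2
  have hcardsplitP : ((pC.card : ℕ) : ℝ) + ((pN.card : ℕ) : ℝ)
      = ((((Finset.Ico (0:ℤ) t₁).filter (fun t => ∃ i, ¬ k i ≤ t)).card : ℕ) : ℝ) := by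
    have h := Finset.card_filter_add_card_filter_not
      (s := (Finset.Ico (0:ℤ) t₁).filter (fun t => ∃ i, ¬ k i ≤ t))
      (p := fun t => IsClosedSet L (Finset.univ.filter (fun i => k i ≤ t)))
    exact_mod_cast congrArg (Nat.cast : ℕ → ℝ) h
  -- Hneg + Hpos ≥ Mk
  have hMneHP : ((Mk : ℕ) : ℝ)
      ≤ ((((Finset.Ico t₀ (0:ℤ)).filter (fun t => ∃ i, k i ≤ t)).card : ℕ) : ℝ)
        + ((((Finset.Ico (0:ℤ) t₁).filter (fun t => ∃ i, ¬ k i ≤ t)).card : ℕ) : ℝ) := by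
    have hnefin : Nonempty (Fin m) := ⟨⟨0, hm⟩⟩
    obtain ⟨i₀, _, hi₀⟩ := Finset.exists_mem_eq_sup (Finset.univ : Finset (Fin m))
      Finset.univ_nonempty (fun i => (k i).natAbs)
    have hi₀' : Mk = (k i₀).natAbs := by rw [hMkdef]; exact hi₀
    rcases le_or_gt (k i₀) 0 with hneg | hpos
    · have hsub : Finset.Ico (k i₀) (0:ℤ) ⊆
          (Finset.Ico t₀ (0:ℤ)).filter (fun t => ∃ i, k i ≤ t) := by
        intro t ht
        have h1 := Finset.mem_Ico.mp ht
        refine Finset.mem_filter.mpr ⟨Finset.mem_Ico.mpr ⟨?_, h1.2⟩, ⟨i₀, h1.1⟩⟩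
        have := ht₀ i₀
        omega
      have hcard2 : ((Finset.Ico (k i₀) (0:ℤ)).card : ℤ) = (Mk : ℤ) := by
        rw [Int.card_Ico]
        have : ((k i₀).natAbs : ℤ) = -(k i₀) := by omega
        omega
      have h3 := Finset.card_le_card hsub
      have h4 : ((Mk : ℕ) : ℝ)
          ≤ ((((Finset.Ico t₀ (0:ℤ)).filter (fun t => ∃ i, k i ≤ t)).card : ℕ) : ℝ) := by
        have : (Mk : ℤ) ≤ ((((Finset.Ico t₀ (0:ℤ)).filter
            (fun t => ∃ i, k i ≤ t)).card : ℕ) : ℤ) := by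
          rw [← hcard2]
          exact_mod_cast h3
        exact_mod_cast this
      have h5 : (0:ℝ) ≤ ((((Finset.Ico (0:ℤ) t₁).filter
          (fun t => ∃ i, ¬ k i ≤ t)).card : ℕ) : ℝ) := Nat.cast_nonneg _
      linarith
    · have hsub : Finset.Ico (0:ℤ) (k i₀) ⊆
          (Finset.Ico (0:ℤ) t₁).filter (fun t => ∃ i, ¬ k i ≤ t) := by
        intro t ht
        have h1 := Finset.mem_Ico.mp ht
        refine Finset.mem_filter.mpr ⟨Finset.mem_Ico.mpr ⟨h1.1, ?_⟩, ⟨i₀, by omega⟩⟩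
        have := ht₁ i₀
        omega
      have hcard2 : ((Finset.Ico (0:ℤ) (k i₀)).card : ℤ) = (Mk : ℤ) := by
        rw [Int.card_Ico]
        have : ((k i₀).natAbs : ℤ) = k i₀ := by omega
        omega
      have h3 := Finset.card_le_card hsub
      have h4 : ((Mk : ℕ) : ℝ)
          ≤ ((((Finset.Ico (0:ℤ) t₁).filter (fun t => ∃ i, ¬ k i ≤ t)).card : ℕ) : ℝ) := by
        have : (Mk : ℤ) ≤ ((((Finset.Ico (0:ℤ) t₁).filter
            (fun t => ∃ i, ¬ k i ≤ t)).card : ℕ) : ℤ) := by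
          rw [← hcard2]
          exact_mod_cast h3
        exact_mod_cast this
      have h5 : (0:ℝ) ≤ ((((Finset.Ico t₀ (0:ℤ)).filter
          (fun t => ∃ i, k i ≤ t)).card : ℕ) : ℝ) := Nat.cast_nonneg _
      linarith
  -- final combination
  rw [hLHS, hIdNeg, hIdPos, hPhiSum, hPsiSum]
  have hεle0 : min ε₀ ε₁ ≤ ε₀ := min_le_left _ _
  have hεle1 : min ε₀ ε₁ ≤ ε₁ := min_le_right _ _
  have hεpos : 0 < min ε₀ ε₁ := lt_min hε₀pos hε₁pos
  have hHneg0 : (0:ℝ) ≤ ((((Finset.Ico t₀ (0:ℤ)).filter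
      (fun t => ∃ i, k i ≤ t)).card : ℕ) : ℝ) := Nat.cast_nonneg _
  have hHpos0 : (0:ℝ) ≤ ((((Finset.Ico (0:ℤ) t₁).filter
      (fun t => ∃ i, ¬ k i ≤ t)).card : ℕ) : ℝ) := Nat.cast_nonneg _
  have hsC0 : (0:ℝ) ≤ ((sC.card : ℕ) : ℝ) := Nat.cast_nonneg _
  have hpC0 : (0:ℝ) ≤ ((pC.card : ℕ) : ℝ) := Nat.cast_nonneg _
  have hsN0 : (0:ℝ) ≤ ((sN.card : ℕ) : ℝ) := Nat.cast_nonneg _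
  have hpN0 : (0:ℝ) ≤ ((pN.card : ℕ) : ℝ) := Nat.cast_nonneg _
  have e1 : ε₀ * ((sC.card : ℕ) : ℝ)
      = ε₀ * ((((Finset.Ico t₀ (0:ℤ)).filter (fun t => ∃ i, k i ≤ t)).card : ℕ) : ℝ)
        - ε₀ * ((sN.card : ℕ) : ℝ) := by
    have : ((sC.card : ℕ) : ℝ)
        = ((((Finset.Ico t₀ (0:ℤ)).filter (fun t => ∃ i, k i ≤ t)).card : ℕ) : ℝ)
          - ((sN.card : ℕ) : ℝ) := by linarith [hcardsplitN]
    rw [this]; ring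
  have e2 : ε₁ * ((pC.card : ℕ) : ℝ)
      = ε₁ * ((((Finset.Ico (0:ℤ) t₁).filter (fun t => ∃ i, ¬ k i ≤ t)).card : ℕ) : ℝ)
        - ε₁ * ((pN.card : ℕ) : ℝ) := by
    have : ((pC.card : ℕ) : ℝ)
        = ((((Finset.Ico (0:ℤ) t₁).filter (fun t => ∃ i, ¬ k i ≤ t)).card : ℕ) : ℝ)
          - ((pN.card : ℕ) : ℝ) := by linarith [hcardsplitP]
    rw [this]; ring
  have a1 : ε₀ * ((sN.card : ℕ) : ℝ) ≤ ε₀ * ((m * c₀ : ℕ) : ℝ) :=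
    mul_le_mul_of_nonneg_left hNcard hε₀pos.le
  have a2 : ε₁ * ((pN.card : ℕ) : ℝ) ≤ ε₁ * ((m * c₀ : ℕ) : ℝ) :=
    mul_le_mul_of_nonneg_left hN'card hε₁pos.le
  have a3 : M₁ * ((sN.card : ℕ) : ℝ) ≤ M₁ * ((m * c₀ : ℕ) : ℝ) :=
    mul_le_mul_of_nonneg_left hNcard hM₁nn
  have a4 : M₁ * ((pN.card : ℕ) : ℝ) ≤ M₁ * ((m * c₀ : ℕ) : ℝ) :=
    mul_le_mul_of_nonneg_left hN'card hM₁nn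
  have a5 : min ε₀ ε₁ * ((((Finset.Ico t₀ (0:ℤ)).filter
        (fun t => ∃ i, k i ≤ t)).card : ℕ) : ℝ)
      ≤ ε₀ * ((((Finset.Ico t₀ (0:ℤ)).filter (fun t => ∃ i, k i ≤ t)).card : ℕ) : ℝ) :=
    mul_le_mul_of_nonneg_right hεle0 hHneg0
  have a6 : min ε₀ ε₁ * ((((Finset.Ico (0:ℤ) t₁).filter
        (fun t => ∃ i, ¬ k i ≤ t)).card : ℕ) : ℝ)
      ≤ ε₁ * ((((Finset.Ico (0:ℤ) t₁).filter (fun t => ∃ i, ¬ k i ≤ t)).card : ℕ) : ℝ) :=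
    mul_le_mul_of_nonneg_right hεle1 hHpos0
  have a7 : min ε₀ ε₁ * ((Mk : ℕ) : ℝ)
      ≤ min ε₀ ε₁ * ((((Finset.Ico t₀ (0:ℤ)).filter
          (fun t => ∃ i, k i ≤ t)).card : ℕ) : ℝ)
        + min ε₀ ε₁ * ((((Finset.Ico (0:ℤ) t₁).filter
          (fun t => ∃ i, ¬ k i ≤ t)).card : ℕ) : ℝ) := by
    have := mul_le_mul_of_nonneg_left hMneHP hεpos.le
    rw [mul_add] at this
    exact this
  linarith [hCbound, hNbound, hC'bound, hN'bound, e1, e2, a1, a2, a3, a4, a5, a6, a7]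

lemma two_rpow_sum {ι : Type*} (s : Finset ι) (x : ι → ℝ) :
    (2:ℝ) ^ (∑ i ∈ s, x i) = ∏ i ∈ s, (2:ℝ) ^ (x i) := by
  classical
  induction s using Finset.induction with
  | empty => simp
  | insert _ _ h ih =>
    rw [Finset.sum_insert h, Finset.prod_insert h, Real.rpow_add two_pos, ih]

lemma gset_basis (L : Fin m → ((Fin n → ℝ) →ₗ[ℝ] ℝ))
    (hrank : Module.finrank ℝ ↥(Submodule.span ℝ (Set.range L)) = n) (k : Fin m → ℤ) :
    (gset L k).card = n ∧
      Submodule.span ℝ (L '' ((gset L k : Finset (Fin m)) : Set (Fin m))) = ⊤ := by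
  have hspan := gset_span L k Set.univ (fun i _ j _ => Set.mem_univ j)
  rw [Set.inter_univ, Set.image_univ] at hspan
  constructor
  · have h1 := gset_card_inter L k Finset.univ (fun i _ j _ => Finset.mem_univ j)
    rw [Finset.inter_univ] at h1
    rw [h1, Finset.coe_univ, Set.image_univ, hrank]
  · rw [hspan]
    apply Submodule.eq_top_of_finrank_eq
    rw [hrank]
    have hdual : Module.finrank ℝ (Module.Dual ℝ (Fin n → ℝ)) = n := by
      rw [Subspace.dual_finrank_eq]
      exact Module.finrank_fin_fun ℝ
    exact hdual.symm

def shellSet (L : Fin m → ((Fin n → ℝ) →ₗ[ℝ] ℝ)) (k : Fin m → ℤ) : Set (Fin n → ℝ) :=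
  {x | ∀ i, |L i x| ∈ Set.Ioc ((2:ℝ)^(k i)) ((2:ℝ)^(k i + 1))}

lemma shellSet_measurable (L : Fin m → ((Fin n → ℝ) →ₗ[ℝ] ℝ)) (k : Fin m → ℤ) :
    MeasurableSet (shellSet L k) := by
  have heq : shellSet L k = ⋂ i, (fun x => |L i x|) ⁻¹'
      (Set.Ioc ((2:ℝ)^(k i)) ((2:ℝ)^(k i + 1))) := by
    ext x
    simp [shellSet, Set.mem_iInter]
  rw [heq]
  refine MeasurableSet.iInter (fun i => ?_)
  exact ((L i).continuous_of_finiteDimensional.measurable).abs measurableSet_Ioc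

lemma shellSet_disjoint (L : Fin m → ((Fin n → ℝ) →ₗ[ℝ] ℝ)) :
    Pairwise (Function.onFun Disjoint (shellSet L)) := by
  intro k k' hkk'
  rw [Function.onFun, Set.disjoint_left]
  intro x hx hx'
  apply hkk'
  funext i
  have h1 := hx i
  have h2 := hx' i
  by_contra hne
  rcases lt_or_gt_of_ne hne with h | h
  · have hle : (2:ℝ)^(k i + 1) ≤ (2:ℝ)^(k' i) := zpow_le_zpow_right₀ one_le_two (by omega)
    have := h1.2
    have := h2.1
    linarith [h1.2, h2.1]
  · have hle : (2:ℝ)^(k' i + 1) ≤ (2:ℝ)^(k i) := zpow_le_zpow_right₀ one_le_two (by omega)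
    linarith [h1.1, h2.2]

lemma shellSet_cover (L : Fin m → ((Fin n → ℝ) →ₗ[ℝ] ℝ)) (hZ : ∀ i, L i ≠ 0) :
    volume (Set.univ \ ⋃ k : Fin m → ℤ, shellSet L k) = 0 := by
  have hsub : Set.univ \ (⋃ k : Fin m → ℤ, shellSet L k)
      ⊆ ⋃ i, ((LinearMap.ker (L i) : Submodule ℝ (Fin n → ℝ)) : Set (Fin n → ℝ)) := by
    intro x hx
    simp only [Set.mem_diff, Set.mem_iUnion] at hx ⊢
    by_contra hno
    push_neg at hno
    apply hx.2
    have hpos : ∀ i, 0 < |L i x| := fun i =>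
      abs_pos.mpr (fun h => hno i (LinearMap.mem_ker.mpr h))
    choose kk hkk using fun i => exists_mem_Ioc_zpow (hpos i) (one_lt_two (α := ℝ))
    exact ⟨kk, fun i => hkk i⟩
  refine measure_mono_null hsub (measure_iUnion_null (fun i => ?_))
  exact Measure.addHaar_submodule volume _
    (fun hker => hZ i (LinearMap.ker_eq_top.mp hker))

end PC

/-- Proposition 7.8 (power counting theorem for global integrability).
`L₁,…,L_m` are linear functionals on `ℝ^n` whose span has dimension `n`; each `|f_i|` is
bounded near `0` by `c_i|y|^{α_i}`, near `∞` by `c_i|y|^{β_i}`, and is bounded on the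
middle range. If `d₀(S) = r(S) + Σ_{i ∈ s(S)} α_i > 0` for every nonempty `S` with
`s(S) = S`, and `d_∞(S) = n − r(S) + Σ_{i ∉ s(S)} β_i < 0` for every proper `S` with
`s(S) = S` (including `S = ∅`), then `∫_{ℝ^n} Π_i |f_i(L_i(x))| dx < ∞`. -/
theorem power_counting_global
    (n m : ℕ)
    (L : Fin m → ((Fin n → ℝ) →ₗ[ℝ] ℝ))
    (f : Fin m → ℝ → ℝ) (hf_meas : ∀ i, Measurable (f i))
    (a b c : Fin m → ℝ) (α β : Fin m → ℝ)
    (ha : ∀ i, 0 < a i) (hab : ∀ i, a i ≤ b i) (hc : ∀ i, 0 < c i)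
    (hsmall : ∀ i, ∀ y : ℝ, |y| < a i → |f i y| ≤ c i * |y| ^ (α i))
    (hlarge : ∀ i, ∀ y : ℝ, b i < |y| → |f i y| ≤ c i * |y| ^ (β i))
    (hmid : ∀ i, ∃ M : ℝ, ∀ y : ℝ, a i ≤ |y| → |y| ≤ b i → |f i y| ≤ M)
    (hrank : Module.finrank ℝ ↥(Submodule.span ℝ (Set.range L)) = n)
    (h0 : ∀ S : Finset (Fin m), S.Nonempty →
      Finset.univ.filter (fun i => L i ∈ Submodule.span ℝ (L '' (S : Set (Fin m)))) = S →
      0 < (Module.finrank ℝ ↥(Submodule.span ℝ (L '' (S : Set (Fin m)))) : ℝ) +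
        ∑ i ∈ Finset.univ.filter
          (fun i => L i ∈ Submodule.span ℝ (L '' (S : Set (Fin m)))), α i)
    (hinf : ∀ S : Finset (Fin m), S ≠ Finset.univ →
      Finset.univ.filter (fun i => L i ∈ Submodule.span ℝ (L '' (S : Set (Fin m)))) = S →
      ((n : ℝ) - (Module.finrank ℝ ↥(Submodule.span ℝ (L '' (S : Set (Fin m)))) : ℝ) +
        ∑ i ∈ (Finset.univ.filter
          (fun i => L i ∈ Submodule.span ℝ (L '' (S : Set (Fin m)))))ᶜ, β i) < 0) :
    Integrable (fun x : Fin n → ℝ => ∏ i, |f i (L i x)|)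
      (volume : Measure (Fin n → ℝ)) := by
  classical
  have hFmeas : Measurable (fun x : Fin n → ℝ => ∏ i, |f i (L i x)|) := by
    refine Finset.measurable_prod _ (fun i _ => ?_)
    exact ((hf_meas i).comp (L i).continuous_of_finiteDimensional.measurable).abs
  have hFnn : ∀ x, 0 ≤ ∏ i, |f i (L i x)| :=
    fun x => Finset.prod_nonneg (fun i _ => abs_nonneg _)
  rcases Nat.eq_zero_or_pos n with hn0 | hnpos
  · subst hn0
    have hfin : IsFiniteMeasure (volume : Measure (Fin 0 → ℝ)) := by
      constructor
      have h1 : (Set.univ : Set (Fin 0 → ℝ)) = Set.univ.pi (fun _ : Fin 0 => Set.univ) := by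
        simp
      rw [h1, volume_pi_pi]
      simp
    have hconst : (fun x : Fin 0 → ℝ => ∏ i, |f i (L i x)|)
        = fun _ => ∏ i, |f i (L i 0)| := by
      funext x
      rw [Subsingleton.elim x 0]
    rw [hconst]
    exact integrable_const _
  have hm : 0 < m := by
    rcases Nat.eq_zero_or_pos m with h | h
    · exfalso
      subst h
      rw [Set.range_eq_empty, Submodule.span_empty, finrank_bot] at hrank
      omega
    · exact h
  by_cases hZ : ∀ i, L i ≠ 0
  · -- MAIN CASE
    have hpt : ∀ i : Fin m, ∃ D : ℝ, 0 ≤ D ∧ ∀ y : ℝ,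
        |f i y| ≤ D * (if |y| ≤ 1 then |y| ^ α i else |y| ^ β i) := by
      intro i
      obtain ⟨M, hM⟩ := hmid i
      exact PC.pointwise_bound (ha i) (hab i) (hc i) (hsmall i) (hlarge i) hM
    choose D hD0 hD using hpt
    obtain ⟨ε, C, hεpos, hcomb⟩ := PC.comb_estimate L α β hm hrank h0 hinf
    set δ : ℝ := ε / m with hδdef
    have hδpos : 0 < δ := div_pos hεpos (by exact_mod_cast hm)
    set CP : ℝ := ∏ i, (D i * (2:ℝ) ^ (|α i| + |β i|)) with hCPdef
    have hCPnn : 0 ≤ CP :=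
      Finset.prod_nonneg (fun i _ => mul_nonneg (hD0 i) (Real.rpow_nonneg (by norm_num) _))
    set K : ENNReal := ENNReal.ofReal CP * PC.detConst L
      * ENNReal.ofReal ((2:ℝ) ^ (2*(n:ℝ) + C)) with hKdef
    have hKlt : K < ⊤ := by
      rw [hKdef]
      exact ENNReal.mul_lt_top
        (ENNReal.mul_lt_top ENNReal.ofReal_lt_top (PC.detConst_lt_top L))
        ENNReal.ofReal_lt_top
    have hperk : ∀ k : Fin m → ℤ,
        ∫⁻ x in PC.shellSet L k, ENNReal.ofReal (∏ i, |f i (L i x)|) ∂volume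
        ≤ K * ∏ i, ENNReal.ofReal ((2:ℝ) ^ (-δ * |((k i : ℤ) : ℝ)|)) := by
      intro k
      rcases Set.eq_empty_or_nonempty (PC.shellSet L k) with hemp | ⟨x₀, hx₀⟩
      · rw [hemp]
        simp
      · have h1 := hcomb k x₀ hx₀
        have hbound : ∀ x ∈ PC.shellSet L k, (∏ i, |f i (L i x)|)
            ≤ CP * (2:ℝ) ^ (∑ i, ((k i : ℤ) : ℝ) * (if k i < 0 then α i else β i)) := by
          intro x hx
          have hfac : ∀ i : Fin m, |f i (L i x)|
              ≤ (D i * (2:ℝ) ^ (|α i| + |β i|))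
                * (2:ℝ) ^ (((k i : ℤ) : ℝ) * (if k i < 0 then α i else β i)) := by
            intro i
            have h2 := PC.shell_bound (α := α i) (β := β i) (hx i).1 (hx i).2
            calc |f i (L i x)|
                ≤ D i * (if |L i x| ≤ 1 then |L i x| ^ α i else |L i x| ^ β i) :=
                  hD i (L i x)
              _ ≤ D i * ((2:ℝ) ^ (|α i| + |β i|)
                  * (2:ℝ) ^ (((k i : ℤ) : ℝ) * (if k i < 0 then α i else β i))) :=
                  mul_le_mul_of_nonneg_left h2 (hD0 i)
              _ = (D i * (2:ℝ) ^ (|α i| + |β i|))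
                  * (2:ℝ) ^ (((k i : ℤ) : ℝ) * (if k i < 0 then α i else β i)) := by
                  ring
          calc ∏ i, |f i (L i x)|
              ≤ ∏ i, ((D i * (2:ℝ) ^ (|α i| + |β i|))
                  * (2:ℝ) ^ (((k i : ℤ) : ℝ) * (if k i < 0 then α i else β i))) :=
                Finset.prod_le_prod (fun i _ => abs_nonneg _) (fun i _ => hfac i)
            _ = CP * (2:ℝ) ^ (∑ i, ((k i : ℤ) : ℝ) * (if k i < 0 then α i else β i)) := by
                rw [Finset.prod_mul_distrib, hCPdef, PC.two_rpow_sum]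
        have hexp : (∑ i, ((k i : ℤ) : ℝ) * (if k i < 0 then α i else β i))
            + ∑ i ∈ PC.gset L k, ((k i : ℤ) : ℝ)
            ≤ C + ∑ i, (-δ * |((k i : ℤ) : ℝ)|) := by
          have h2 : ∑ i, |((k i : ℤ) : ℝ)|
              ≤ (m : ℝ) * ((Finset.univ.sup (fun i => (k i).natAbs) : ℕ) : ℝ) := by
            have h3 := Finset.sum_le_card_nsmul Finset.univ
              (fun i => |((k i : ℤ) : ℝ)|)
              (((Finset.univ.sup (fun i => (k i).natAbs) : ℕ) : ℝ)) (fun i _ => by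
                have h4 : ((k i).natAbs : ℤ)
                    ≤ ((Finset.univ.sup (fun i => (k i).natAbs) : ℕ) : ℤ) := by
                  exact_mod_cast Finset.le_sup (f := fun i => (k i).natAbs)
                    (Finset.mem_univ i)
                have h5 : |((k i : ℤ) : ℝ)| = (((k i).natAbs : ℕ) : ℝ) := by
                  rw [Nat.cast_natAbs, Int.cast_abs]
                show |((k i : ℤ) : ℝ)|
                  ≤ (((Finset.univ.sup (fun i => (k i).natAbs) : ℕ) : ℝ))
                rw [h5]
                exact_mod_cast h4)
            rw [Finset.card_univ, Fintype.card_fin, nsmul_eq_mul] at h3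
            exact h3
          have h6 : δ * ∑ i, |((k i : ℤ) : ℝ)|
              ≤ ε * ((Finset.univ.sup (fun i => (k i).natAbs) : ℕ) : ℝ) := by
            calc δ * ∑ i, |((k i : ℤ) : ℝ)|
                ≤ δ * ((m : ℝ) * ((Finset.univ.sup (fun i => (k i).natAbs) : ℕ) : ℝ)) :=
                  mul_le_mul_of_nonneg_left h2 hδpos.le
              _ = ε * ((Finset.univ.sup (fun i => (k i).natAbs) : ℕ) : ℝ) := by
                  rw [hδdef]
                  have hm0 : (m:ℝ) ≠ 0 := by positivity
                  field_simp
          have h7 : ∑ i, (-δ * |((k i : ℤ) : ℝ)|) = -(δ * ∑ i, |((k i : ℤ) : ℝ)|) := by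
            rw [Finset.mul_sum]
            rw [← Finset.sum_neg_distrib]
            refine Finset.sum_congr rfl (fun i _ => by ring)
          linarith
        have hmain : ENNReal.ofReal ((2:ℝ) ^ (∑ i, ((k i : ℤ) : ℝ)
              * (if k i < 0 then α i else β i)))
            * ENNReal.ofReal ((2:ℝ) ^ (2*(n:ℝ) + ∑ i ∈ PC.gset L k, ((k i : ℤ) : ℝ)))
            ≤ ENNReal.ofReal ((2:ℝ) ^ (2*(n:ℝ) + C))
            * ∏ i, ENNReal.ofReal ((2:ℝ) ^ (-δ * |((k i : ℤ) : ℝ)|)) := by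
          rw [← PC.ofReal_two_rpow_sum Finset.univ (fun i => -δ * |((k i : ℤ) : ℝ)|),
            ← ENNReal.ofReal_mul (by positivity), ← ENNReal.ofReal_mul (by positivity),
            ← Real.rpow_add two_pos, ← Real.rpow_add two_pos]
          apply ENNReal.ofReal_le_ofReal
          apply (Real.rpow_le_rpow_left_iff one_lt_two).mpr
          linarith
        calc ∫⁻ x in PC.shellSet L k, ENNReal.ofReal (∏ i, |f i (L i x)|) ∂volume
            ≤ ∫⁻ _ in PC.shellSet L k, ENNReal.ofReal (CP * (2:ℝ)
                ^ (∑ i, ((k i : ℤ) : ℝ) * (if k i < 0 then α i else β i))) ∂volume :=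
              setLIntegral_mono' (PC.shellSet_measurable L k)
                (fun x hx => ENNReal.ofReal_le_ofReal (hbound x hx))
          _ = ENNReal.ofReal (CP * (2:ℝ)
                ^ (∑ i, ((k i : ℤ) : ℝ) * (if k i < 0 then α i else β i)))
              * volume (PC.shellSet L k) := setLIntegral_const _ _
          _ ≤ ENNReal.ofReal (CP * (2:ℝ)
                ^ (∑ i, ((k i : ℤ) : ℝ) * (if k i < 0 then α i else β i)))
              * (PC.detConst L * ENNReal.ofReal ((2:ℝ)
                ^ (2*(n:ℝ) + ∑ i ∈ PC.gset L k, ((k i : ℤ) : ℝ)))) := by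
              refine mul_le_mul_right ?_ _
              have hb := PC.gset_basis L hrank k
              exact PC.vol_shell L (PC.gset L k) hb.1 hb.2 k
          _ = (ENNReal.ofReal CP * PC.detConst L)
              * (ENNReal.ofReal ((2:ℝ)
                  ^ (∑ i, ((k i : ℤ) : ℝ) * (if k i < 0 then α i else β i)))
                * ENNReal.ofReal ((2:ℝ)
                  ^ (2*(n:ℝ) + ∑ i ∈ PC.gset L k, ((k i : ℤ) : ℝ)))) := by
              rw [ENNReal.ofReal_mul hCPnn]
              ring
          _ ≤ (ENNReal.ofReal CP * PC.detConst L)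
              * (ENNReal.ofReal ((2:ℝ) ^ (2*(n:ℝ) + C))
                * ∏ i, ENNReal.ofReal ((2:ℝ) ^ (-δ * |((k i : ℤ) : ℝ)|))) :=
              mul_le_mul_right hmain _
          _ = K * ∏ i, ENNReal.ofReal ((2:ℝ) ^ (-δ * |((k i : ℤ) : ℝ)|)) := by
              rw [hKdef]
              ring
    have hU : MeasurableSet (⋃ k : Fin m → ℤ, PC.shellSet L k) :=
      MeasurableSet.iUnion (fun k => PC.shellSet_measurable L k)
    have htotal : ∫⁻ x, ENNReal.ofReal (∏ i, |f i (L i x)|) ∂volume < ⊤ := by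
      rw [← lintegral_add_compl (fun x => ENNReal.ofReal (∏ i, |f i (L i x)|)) hU]
      have hcompl0 : ∫⁻ x in (⋃ k : Fin m → ℤ, PC.shellSet L k)ᶜ,
          ENNReal.ofReal (∏ i, |f i (L i x)|) ∂volume = 0 := by
        refine setLIntegral_measure_zero _ _ ?_
        rw [Set.compl_eq_univ_diff]
        exact PC.shellSet_cover L hZ
      rw [hcompl0, add_zero]
      rw [lintegral_iUnion (fun k => PC.shellSet_measurable L k) (PC.shellSet_disjoint L)]
      have hsum_le : ∑' k : Fin m → ℤ,
          ∫⁻ x in PC.shellSet L k, ENNReal.ofReal (∏ i, |f i (L i x)|) ∂volume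
          ≤ ∑' k : Fin m → ℤ, K * ∏ i, ENNReal.ofReal ((2:ℝ) ^ (-δ * |((k i : ℤ) : ℝ)|)) :=
        ENNReal.tsum_le_tsum hperk
      rw [ENNReal.tsum_mul_left] at hsum_le
      exact lt_of_le_of_lt hsum_le
        (ENNReal.mul_lt_top hKlt (PC.tsum_pi_rpow m hδpos))
    refine ⟨hFmeas.aestronglyMeasurable, ?_⟩
    rw [hasFiniteIntegral_iff_ofReal (Filter.Eventually.of_forall hFnn)]
    exact htotal
  · -- some functional is zero
    push_neg at hZ
    obtain ⟨i₀, hi₀⟩ := hZ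
    by_cases hαz : ∃ i, L i = 0 ∧ α i ≠ 0
    · obtain ⟨i₁, hL1, hα1⟩ := hαz
      have hf0 : ∀ y : Fin n → ℝ, ∏ i, |f i (L i y)| = 0 := by
        intro y
        refine Finset.prod_eq_zero (Finset.mem_univ i₁) ?_
        rw [hL1, LinearMap.zero_apply]
        have h1 := hsmall i₁ 0 (by rw [abs_zero]; exact ha i₁)
        rw [abs_zero, Real.zero_rpow hα1, mul_zero] at h1
        exact le_antisymm h1 (abs_nonneg _)
      have heq : (fun x : Fin n → ℝ => ∏ i, |f i (L i x)|) = fun _ => 0 := funext hf0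
      rw [heq]
      exact integrable_zero _ _ _
    · exfalso
      push_neg at hαz
      set Z := Finset.univ.filter (fun i => L i = 0) with hZdef
      have hZne : Z.Nonempty := ⟨i₀, Finset.mem_filter.mpr ⟨Finset.mem_univ _, hi₀⟩⟩
      have hZspan : Submodule.span ℝ (L '' (Z : Set (Fin m))) = ⊥ := by
        rw [Submodule.span_eq_bot]
        rintro v ⟨j, hj, rfl⟩
        exact (Finset.mem_filter.mp (Finset.mem_coe.mp hj)).2
      have hZclosed : Finset.univ.filter
          (fun i => L i ∈ Submodule.span ℝ (L '' (Z : Set (Fin m)))) = Z := by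
        rw [hZspan]
        ext i
        simp [Finset.mem_filter, Submodule.mem_bot, hZdef]
      have h := h0 Z hZne hZclosed
      rw [hZclosed, hZspan] at h
      have hsum0 : ∑ i ∈ Z, α i = 0 :=
        Finset.sum_eq_zero (fun i hi => hαz i (Finset.mem_filter.mp hi).2)
      rw [hsum0, finrank_bot] at h
      norm_num at h
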